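/- arXiv:1708.04213 — 11 statements merged into one kernel-verified Lean document; each statement's English description precedes it below -/
import Mathlib

section
/- Let p be a prime and let (a,b;c) be admissible rational hypergeometric parameters for which p is a good prime. If for every index j ≥ 1 one has τ_j(c−1) ≤ max(τ_j(a−1), τ_j(b−1)), then v_p(A_m) ≥ 0 for every m ≥ 0; in particular all coefficients of ₂F₁(a,b;c;z) are p-adic integers. -/
/-!
Writing `τ j` for the truncations of `x - 1`, the decomposition
`x + k = (x - 1 - τ j) + (k + 1 + τ j)` shows `p^j ∣ x + k` iff `p^j ∣ k + 1 + τ j`, which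
happens for exactly `⌊(m + τ j) / p^j⌋` of the `k < m`. Counting the `k` with `p^j ∣ x + k`
for each `j` gives the Legendre-type formula `v_p((x)_m) = ∑_{j ≥ 1} ⌊(m + τ_j(x-1)) / p^j⌋`;
for `x = 1` it is Legendre's formula for `m!`. Hence `v_p(A_m)` is a sum over `j ≥ 1` of
`⌊(m + τ_j(a-1))/p^j⌋ + ⌊(m + τ_j(b-1))/p^j⌋ - ⌊(m + τ_j(c-1))/p^j⌋ - ⌊m/p^j⌋`, and each such
term is nonnegative as soon as `τ_j(c-1) ≤ max(τ_j(a-1), τ_j(b-1))`.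
-/

open scoped BigOperators

/-- The `m`-th coefficient `A_m = (a)_m (b)_m / ((c)_m · m!)` of the Gauss
hypergeometric series `₂F₁(a,b;c;z)`. -/
noncomputable def hypCoeff (a b c : ℚ) (m : ℕ) : ℚ :=
  ((ascPochhammer ℚ m).eval a * (ascPochhammer ℚ m).eval b) /
    ((ascPochhammer ℚ m).eval c * (m.factorial : ℚ))

/-- `₂F₁(a,b;c;z)` has `p`-adically unbounded coefficients. -/
def UnboundedAt (p : ℕ) (a b c : ℚ) : Prop :=
  ∀ N : ℕ, ∃ m : ℕ, padicValRat p (hypCoeff a b c m) < -(N : ℤ)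

/-- `(a,b;c)` are admissible hypergeometric parameters. -/
def Admissible (a b c : ℚ) : Prop :=
  0 < a ∧ a < 1 ∧ 0 < b ∧ b < 1 ∧ 0 < c ∧ c < 1 ∧ a ≠ c ∧ b ≠ c

/-- `τ : ℕ → ℤ` is the family of truncations of the rational number `x`
(with `v_p(x) ≥ 0`): `τ j` is the unique integer with `0 ≤ τ j < p^j` and
`v_p(x - τ j) ≥ j` (the latter interpreted as `x = τ j` or `j ≤ v_p(x - τ j)`). -/
def IsTrunc (p : ℕ) (x : ℚ) (τ : ℕ → ℤ) : Prop :=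
  ∀ j : ℕ, 0 ≤ τ j ∧ τ j < (p : ℤ) ^ j ∧
    (x = (τ j : ℚ) ∨ (j : ℤ) ≤ padicValRat p (x - τ j))

open Finset Filter

theorem Nat.card_filter_range_dvd_add_add_one {q t : ℕ} (ht : t < q) (m : ℕ) :
    #{k ∈ range m | q ∣ k + t + 1} = (m + t) / q := by
  induction m with
  | zero => simp [Nat.div_eq_of_lt ht]
  | succ m ih =>
    rw [range_add_one, filter_insert, show m + 1 + t = m + t + 1 by ring, Nat.succ_div, ← ih]
    split_ifs with h
    · exact card_insert_of_notMem (by simp)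
    · rfl

theorem Int.add_ediv_add_ediv_le_of_le_max {m q s t u : ℤ} (hq : 0 < q) (hs : 0 ≤ s)
    (ht : 0 ≤ t) (hu : u ≤ max s t) :
    (m + u) / q + m / q ≤ (m + s) / q + (m + t) / q := by
  rcases le_max_iff.mp hu with hus | hut
  · exact add_le_add (Int.ediv_le_ediv hq (by omega)) (Int.ediv_le_ediv hq (by omega))
  · rw [add_comm ((m + s) / q)]
    exact add_le_add (Int.ediv_le_ediv hq (by omega)) (Int.ediv_le_ediv hq (by omega))

theorem Finset.sum_eq_sum_Ico_card_filter_le {ι : Type*} (s : Finset ι) {f : ι → ℤ} {J : ℕ}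
    (hf : ∀ i ∈ s, 0 ≤ f i ∧ f i < J) :
    ∑ i ∈ s, f i = ∑ j ∈ Ico 1 J, (#{i ∈ s | ((j : ℕ) : ℤ) ≤ f i} : ℤ) := by
  have hcount : ∀ i ∈ s, f i = #{j ∈ Ico 1 J | ((j : ℕ) : ℤ) ≤ f i} := by
    intro i hi
    obtain ⟨h0, hJ⟩ := hf i hi
    rw [show {j ∈ Ico 1 J | ((j : ℕ) : ℤ) ≤ f i} = Ico 1 ((f i).toNat + 1) by
      ext; simp only [mem_filter, mem_Ico, Order.lt_add_one_iff]; omega,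
      Nat.card_Ico]
    omega
  simp_rw [sum_congr rfl hcount, ← sum_boole]
  exact sum_comm

namespace padicValRat

variable {p : ℕ} [Fact p.Prime]

theorem le_padicValRat_add_iff {u w : ℚ} {j : ℤ} (hu : u = 0 ∨ j ≤ padicValRat p u)
    (hw : w ≠ 0) (huw : u + w ≠ 0) :
    j ≤ padicValRat p (u + w) ↔ j ≤ padicValRat p w := by
  rcases hu with rfl | hu
  · rw [zero_add]
  refine ⟨fun h => ?_, fun h => (le_min hu h).trans (min_le_padicValRat_add huw)⟩
  have := min_le_padicValRat_add (p := p) (q := u + w) (r := -u) (by simpa using hw)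
  rw [padicValRat.neg, add_neg_cancel_comm] at this
  exact (le_min h hu).trans this

end padicValRat

theorem isTrunc_zero {p : ℕ} (hp : 0 < p) : IsTrunc p 0 0 :=
  fun j => ⟨le_rfl, pow_pos (by exact_mod_cast hp) j, Or.inl (by simp)⟩

section Pochhammer

variable {p : ℕ} [Fact p.Prime] {x : ℚ} {τ : ℕ → ℤ}

theorem IsTrunc.le_padicValRat_add_natCast_iff (hτ : IsTrunc p (x - 1) τ) {k : ℕ}
    (hx : x + k ≠ 0) (j : ℕ) :
    (j : ℤ) ≤ padicValRat p (x + k) ↔ (p : ℤ) ^ j ∣ k + 1 + τ j := by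
  obtain ⟨h0, -, htrunc⟩ := hτ j
  have hw : (k : ℤ) + 1 + τ j ≠ 0 := by omega
  have hsplit : x + k = (x - 1 - τ j) + ((k + 1 + τ j : ℤ) : ℚ) := by push_cast; ring
  rw [hsplit] at hx ⊢
  rw [padicValRat.le_padicValRat_add_iff (htrunc.imp sub_eq_zero.mpr id) (by exact_mod_cast hw) hx,
    padicValRat.of_int, padicValInt_dvd_iff]
  simp [hw]

theorem IsTrunc.card_filter_le_padicValRat (hτ : IsTrunc p (x - 1) τ)
    (hx : ∀ k : ℕ, x + k ≠ 0) (m j : ℕ) :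
    (#{k ∈ range m | (j : ℤ) ≤ padicValRat p (x + (k : ℕ))} : ℤ) = (m + τ j) / (p : ℤ) ^ j := by
  obtain ⟨h0, hlt, -⟩ := hτ j
  obtain ⟨t, ht⟩ := Int.eq_ofNat_of_zero_le h0
  rw [ht] at hlt ⊢
  have hdvd : ∀ k : ℕ, (j : ℤ) ≤ padicValRat p (x + k) ↔ p ^ j ∣ k + t + 1 := by
    intro k
    rw [hτ.le_padicValRat_add_natCast_iff (hx k), ht, ← Int.natCast_dvd_natCast]
    push_cast
    ring_nf
  rw [filter_congr fun k _ => hdvd k,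
    Nat.card_filter_range_dvd_add_add_one (by exact_mod_cast hlt)]
  push_cast
  rfl

theorem padicValRat_ascPochhammer_eval (hx : ∀ k : ℕ, x + k ≠ 0) (m : ℕ) :
    padicValRat p ((ascPochhammer ℚ m).eval x) = ∑ k ∈ range m, padicValRat p (x + k) := by
  induction m with
  | zero => simp
  | succ m ih =>
    have hne : (ascPochhammer ℚ m).eval x ≠ 0 := by
      simpa [ascPochhammer_eval_eq_zero_iff, eq_neg_iff_add_eq_zero, add_comm] using
        fun k _ => hx k
    rw [ascPochhammer_succ_eval, sum_range_succ, ← ih, padicValRat.mul hne (hx m)]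

theorem IsTrunc.eventually_padicValRat_ascPochhammer_eval_eq (hτ : IsTrunc p (x - 1) τ)
    (hx : ∀ k : ℕ, x + k ≠ 0) (m : ℕ) :
    ∀ᶠ J in atTop, padicValRat p ((ascPochhammer ℚ m).eval x) =
      ∑ j ∈ Ico 1 J, ((m : ℤ) + τ j) / (p : ℤ) ^ j := by
  refine eventually_atTop.mpr ⟨(range m).sup (fun k => (padicValRat p (x + k)).toNat) + 1,
    fun J hJ => ?_⟩
  have hbound : ∀ k ∈ range m, 0 ≤ padicValRat p (x + k) ∧ padicValRat p (x + k) < J := by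
    intro k hk
    have h0 := (hτ.le_padicValRat_add_natCast_iff (hx k) 0).mpr (by simp)
    have hle := le_sup (f := fun k : ℕ => (padicValRat p (x + k)).toNat) hk
    exact ⟨by exact_mod_cast h0, by omega⟩
  rw [padicValRat_ascPochhammer_eval hx, sum_eq_sum_Ico_card_filter_le _ hbound]
  exact sum_congr rfl fun j _ => hτ.card_filter_le_padicValRat hx m j

end Pochhammer

theorem padicValRat_hypCoeff {p : ℕ} [Fact p.Prime] {a b c : ℚ} {m : ℕ}
    (ha : (ascPochhammer ℚ m).eval a ≠ 0) (hb : (ascPochhammer ℚ m).eval b ≠ 0)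
    (hc : (ascPochhammer ℚ m).eval c ≠ 0) :
    padicValRat p (hypCoeff a b c m) =
      padicValRat p ((ascPochhammer ℚ m).eval a) + padicValRat p ((ascPochhammer ℚ m).eval b) -
        (padicValRat p ((ascPochhammer ℚ m).eval c) +
          padicValRat p ((ascPochhammer ℚ m).eval 1)) := by
  have hfac : (m.factorial : ℚ) ≠ 0 := by positivity
  rw [hypCoeff, padicValRat.div (mul_ne_zero ha hb) (mul_ne_zero hc hfac),
    padicValRat.mul ha hb, padicValRat.mul hc hfac, ascPochhammer_eval_one]

theorem stmt_1_general (p : ℕ) (hp : p.Prime) (a b c : ℚ) (hadm : Admissible a b c)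
    (τa τb τc : ℕ → ℤ)
    (hτa : IsTrunc p (a - 1) τa) (hτb : IsTrunc p (b - 1) τb)
    (hτc : IsTrunc p (c - 1) τc)
    (h : ∀ j : ℕ, 1 ≤ j → τc j ≤ max (τa j) (τb j)) :
    ∀ m : ℕ, 0 ≤ padicValRat p (hypCoeff a b c m) := by
  have : Fact p.Prime := ⟨hp⟩
  obtain ⟨ha, -, hb, -, hc, -, -, -⟩ := hadm
  intro m
  have hτ1 : IsTrunc p (1 - 1) 0 := by rw [sub_self]; exact isTrunc_zero hp.pos
  have hval : ∀ {x : ℚ} {τ : ℕ → ℤ}, 0 < x → IsTrunc p (x - 1) τ → ∀ᶠ J in atTop,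
      padicValRat p ((ascPochhammer ℚ m).eval x) = ∑ j ∈ Ico 1 J, ((m : ℤ) + τ j) / (p : ℤ) ^ j :=
    fun hx hτ => hτ.eventually_padicValRat_ascPochhammer_eval_eq (fun k => by positivity) m
  obtain ⟨J, hJa, hJb, hJc, hJ1⟩ :=
    ((hval ha hτa).and ((hval hb hτb).and ((hval hc hτc).and (hval one_pos hτ1)))).exists
  rw [padicValRat_hypCoeff (ascPochhammer_pos m a ha).ne' (ascPochhammer_pos m b hb).ne'
    (ascPochhammer_pos m c hc).ne', hJa, hJb, hJc, hJ1, ← sum_add_distrib, ← sum_add_distrib,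
    sub_nonneg]
  refine sum_le_sum fun j hj => ?_
  simpa using Int.add_ediv_add_ediv_le_of_le_max (pow_pos (by exact_mod_cast hp.pos) j)
    (hτa j).1 (hτb j).1 (h j (mem_Ico.mp hj).1)

/-- If `p` is a good prime for admissible parameters `(a,b;c)` and for every `j ≥ 1`
one has `τ_j(c-1) ≤ max(τ_j(a-1), τ_j(b-1))`, then every coefficient of
`₂F₁(a,b;c;z)` is a `p`-adic integer. -/
theorem stmt_1 (p : ℕ) (hp : p.Prime) (a b c : ℚ) (hadm : Admissible a b c)
    (hgood : padicValRat p (a - 1) = 0 ∧ padicValRat p (b - 1) = 0 ∧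
      padicValRat p (c - 1) = 0)
    (τa τb τc : ℕ → ℤ)
    (hτa : IsTrunc p (a - 1) τa) (hτb : IsTrunc p (b - 1) τb)
    (hτc : IsTrunc p (c - 1) τc)
    (h : ∀ j : ℕ, 1 ≤ j → τc j ≤ max (τa j) (τb j)) :
    ∀ m : ℕ, 0 ≤ padicValRat p (hypCoeff a b c m) :=
  stmt_1_general p hp a b c hadm τa τb τc hτa hτb hτc h
end

section
/- Let (a,b;c) be admissible rational hypergeometric parameters and let D be the least common multiple of the denominators of a, b and c. If there exist infinitely many primes p with p ≡ 1 (mod D) such that the coefficients of ₂F₁(a,b;c;z) are p-adically unbounded, then c < a and c < b. -/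
/- Write a parameter `x ∈ (0, 1]` with denominator dividing `D` as `x = r / D`, `0 < r ≤ D`. Then
`(x)_m = ∏_{k<m} (r + D k) / D`, and `D` is a `p`-adic unit when `p ≡ 1 (mod D)`. Writing
`p^j = D e + 1`, one has `p^j ∣ r + D k` iff `k ≡ r e (mod p^j)`, and `r e < p^j`; so the number
of `k < m` with `p^j ∣ r + D k` is antitone in `r`, hence so is `v_p((x)_m)` in `x`. If `a ≤ c`,
this gives `v_p((a)_m) ≥ v_p((c)_m)` and `v_p((b)_m) ≥ v_p((1)_m) = v_p(m!)`, so
`v_p(A_m) ≥ 0` for all `m`: the coefficients are `p`-adically bounded. -/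

open scoped BigOperators

open Finset

namespace Nat

theorem count_modEq_le_of_mod_le {q v w : ℕ} (n : ℕ) (hq : 0 < q) (hvw : v % q ≤ w % q) :
    n.count (· ≡ w [MOD q]) ≤ n.count (· ≡ v [MOD q]) := by
  rw [count_modEq_card n hq, count_modEq_card n hq]
  gcongr
  split_ifs <;> omega

theorem dvd_add_mul_iff_modEq {d e r k : ℕ} :
    d * e + 1 ∣ r + d * k ↔ k ≡ r * e [MOD d * e + 1] := by
  -- `r + d (r e) = r (d e + 1)` is the multiple of the modulus to compare with
  have hzero : r + d * (r * e) ≡ 0 [MOD d * e + 1] :=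
    modEq_zero_iff_dvd.2 ⟨r, by ring⟩
  calc d * e + 1 ∣ r + d * k
      ↔ r + d * k ≡ r + d * (r * e) [MOD d * e + 1] := by
        rw [← modEq_zero_iff_dvd]; exact ⟨fun h ↦ h.trans hzero.symm, fun h ↦ h.trans hzero⟩
    _ ↔ d * k ≡ d * (r * e) [MOD d * e + 1] := ModEq.add_iff_left rfl
    _ ↔ k ≡ r * e [MOD d * e + 1] :=
        ⟨ModEq.cancel_left_of_coprime (by simp), (ModEq.mul_left d ·)⟩

theorem card_filter_dvd_add_mul_le {d e r s : ℕ} (m : ℕ) (hrs : r ≤ s) (hsd : s ≤ d) :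
    #{k ∈ range m | d * e + 1 ∣ s + d * k} ≤ #{k ∈ range m | d * e + 1 ∣ r + d * k} := by
  simp_rw [dvd_add_mul_iff_modEq, ← count_eq_card_filter_range]
  have hse : s * e < d * e + 1 := Nat.lt_succ_of_le (Nat.mul_le_mul_right e hsd)
  apply count_modEq_le_of_mod_le m (succ_pos _)
  rw [mod_eq_of_lt hse, mod_eq_of_lt ((Nat.mul_le_mul_right e hrs).trans_lt hse)]
  exact Nat.mul_le_mul_right e hrs

theorem sum_padicValNat_add_mul_le {p d r s : ℕ} [hp : Fact p.Prime] (hmod : p ≡ 1 [MOD d])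
    (hr : 0 < r) (hrs : r ≤ s) (hsd : s ≤ d) (m : ℕ) :
    ∑ k ∈ range m, padicValNat p (s + d * k) ≤ ∑ k ∈ range m, padicValNat p (r + d * k) := by
  have hexpand : ∀ x, 0 < x → x ≤ d → ∑ k ∈ range m, padicValNat p (x + d * k) =
      ∑ j ∈ Ico 1 (d + d * m), #{k ∈ range m | p ^ j ∣ x + d * k} := by
    intro x hx hxd
    simp_rw [card_filter]
    rw [sum_comm]
    refine sum_congr rfl fun k hk ↦ ?_
    have hlt : x + d * k < p ^ (d + d * m) := calc
      x + d * k < d + d * m := by have := mem_range.1 hk; nlinarith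
      _ < p ^ (d + d * m) := Nat.lt_pow_self hp.out.one_lt
    rw [← factorization_def _ hp.out, factorization_eq_card_pow_dvd_of_lt hp.out (by omega) hlt,
      card_filter]
  rw [hexpand s (hr.trans_le hrs) hsd, hexpand r hr (hrs.trans hsd)]
  refine sum_le_sum fun j _ ↦ ?_
  obtain ⟨e, he⟩ : ∃ e, p ^ j = d * e + 1 := by
    have hpos : 1 ≤ p ^ j := one_le_pow _ _ hp.out.pos
    obtain ⟨e, he⟩ := (modEq_iff_dvd' hpos).1 (by simpa using (hmod.pow j).symm)
    exact ⟨e, by omega⟩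
  rw [he]
  exact card_filter_dvd_add_mul_le m hrs hsd

end Nat

theorem Rat.exists_nat_eq_div_of_den_dvd {x : ℚ} {D : ℕ} (hx : 0 ≤ x) (hxD : x.den ∣ D)
    (hD : D ≠ 0) :
    ∃ r : ℕ, x = r / D := by
  obtain ⟨t, rfl⟩ := hxD
  refine ⟨x.num.toNat * t, ?_⟩
  have hnum : ((x.num.toNat : ℕ) : ℚ) = x.num := by
    exact_mod_cast Int.toNat_of_nonneg (Rat.num_nonneg.2 hx)
  have ht : (t : ℚ) ≠ 0 := by exact_mod_cast right_ne_zero_of_mul hD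
  push_cast
  rw [hnum, mul_div_mul_right _ _ ht, Rat.num_div_den]

theorem padicValRat_ascPochhammer_eval_div {p D r : ℕ} [Fact p.Prime] (hpD : ¬p ∣ D) (hr : 0 < r)
    (m : ℕ) : padicValRat p ((ascPochhammer ℚ m).eval ((r : ℚ) / D)) =
      ∑ k ∈ range m, padicValNat p (r + D * k) := by
  have hD : (D : ℚ) ≠ 0 := by rintro h; exact hpD (by simp [Nat.cast_eq_zero.1 h])
  induction m with
  | zero => simp
  | succ m ih =>
    have hterm : (r : ℚ) / D + m = ((r + D * m : ℕ) : ℚ) / D := by push_cast; field_simp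
    have hnum : ((r + D * m : ℕ) : ℚ) ≠ 0 := Nat.cast_ne_zero.2 (by omega)
    have hprev : (ascPochhammer ℚ m).eval ((r : ℚ) / D) ≠ 0 :=
      (ascPochhammer_pos m _ (by positivity)).ne'
    rw [ascPochhammer_succ_right, Polynomial.eval_mul, Polynomial.eval_add, Polynomial.eval_X,
      Polynomial.eval_natCast, hterm, padicValRat.mul hprev (div_ne_zero hnum hD),
      padicValRat.div hnum hD, ih, sum_range_succ, padicValRat.of_nat, padicValRat.of_nat,
      padicValNat.eq_zero_of_not_dvd hpD]
    push_cast
    ring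

theorem padicValRat_ascPochhammer_eval_le {p D : ℕ} [hp : Fact p.Prime] (hmod : p ≡ 1 [MOD D])
    {x y : ℚ} (hx : 0 < x) (hxy : x ≤ y) (hy : y ≤ 1) (hxD : x.den ∣ D) (hyD : y.den ∣ D)
    (m : ℕ) :
    padicValRat p ((ascPochhammer ℚ m).eval y) ≤ padicValRat p ((ascPochhammer ℚ m).eval x) := by
  have hpD : ¬p ∣ D := fun h ↦ by
    have h1 : 1 % p = 0 := Eq.trans (hmod.of_dvd h).symm (Nat.mod_self p)
    exact hp.out.one_lt.ne' (Nat.dvd_one.1 (Nat.dvd_of_mod_eq_zero h1))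
  have hD : D ≠ 0 := by rintro rfl; exact hpD (dvd_zero p)
  have hDpos : (0 : ℚ) < D := by positivity
  obtain ⟨r, rfl⟩ := Rat.exists_nat_eq_div_of_den_dvd hx.le hxD hD
  obtain ⟨s, rfl⟩ := Rat.exists_nat_eq_div_of_den_dvd (hx.le.trans hxy) hyD hD
  have hr : 0 < r := by exact_mod_cast (div_pos_iff_of_pos_right hDpos).1 hx
  have hrs : r ≤ s := by exact_mod_cast (div_le_div_iff_of_pos_right hDpos).1 hxy
  have hsD : s ≤ D := by exact_mod_cast (div_le_one hDpos).1 hy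
  rw [padicValRat_ascPochhammer_eval_div hpD hr,
    padicValRat_ascPochhammer_eval_div hpD (hr.trans_le hrs)]
  exact_mod_cast Nat.sum_padicValNat_add_mul_le hmod hr hrs hsD m

theorem hypCoeff_comm (a b c : ℚ) : hypCoeff a b c = hypCoeff b a c := by
  ext m
  rw [hypCoeff, hypCoeff, mul_comm ((ascPochhammer ℚ m).eval a)]

theorem UnboundedAt.comm {p : ℕ} {a b c : ℚ} (h : UnboundedAt p a b c) : UnboundedAt p b a c := by
  rwa [UnboundedAt, ← hypCoeff_comm]

section Bounded

variable {p D : ℕ} [Fact p.Prime] {a b c : ℚ}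

theorem padicValRat_hypCoeff_nonneg (hmod : p ≡ 1 [MOD D]) (ha : 0 < a) (hac : a ≤ c)
    (hc : c ≤ 1) (hb : 0 < b) (hb1 : b ≤ 1) (haD : a.den ∣ D) (hbD : b.den ∣ D)
    (hcD : c.den ∣ D) (m : ℕ) : 0 ≤ padicValRat p (hypCoeff a b c m) := by
  have hne : ∀ x : ℚ, 0 < x → (ascPochhammer ℚ m).eval x ≠ 0 :=
    fun x hx ↦ (ascPochhammer_pos m x hx).ne'
  have hc0 : 0 < c := ha.trans_le hac
  have hac' := padicValRat_ascPochhammer_eval_le hmod ha hac hc haD hcD m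
  have hb1' := padicValRat_ascPochhammer_eval_le hmod hb hb1 le_rfl hbD (by simp) m
  rw [hypCoeff, ← ascPochhammer_eval_one ℚ m,
    padicValRat.div (mul_ne_zero (hne a ha) (hne b hb)) (mul_ne_zero (hne c hc0) (hne 1 one_pos)),
    padicValRat.mul (hne a ha) (hne b hb), padicValRat.mul (hne c hc0) (hne 1 one_pos)]
  linarith

theorem not_unboundedAt_of_le (hmod : p ≡ 1 [MOD D]) (ha : 0 < a) (hac : a ≤ c) (hc : c ≤ 1)
    (hb : 0 < b) (hb1 : b ≤ 1) (haD : a.den ∣ D) (hbD : b.den ∣ D) (hcD : c.den ∣ D) :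
    ¬UnboundedAt p a b c := fun h ↦ by
  obtain ⟨m, hm⟩ := h 0
  have := padicValRat_hypCoeff_nonneg hmod ha hac hc hb hb1 haD hbD hcD m
  omega

end Bounded

/-- If there are infinitely many primes `p ≡ 1 (mod D)` at which `₂F₁(a,b;c;z)`
has `p`-adically unbounded coefficients, then `c < a` and `c < b`. -/
theorem stmt_4 (a b c : ℚ) (hadm : Admissible a b c)
    (D : ℕ) (hD : D = Nat.lcm (Nat.lcm a.den b.den) c.den)
    (hinf : {p : ℕ | p.Prime ∧ p % D = 1 % D ∧ UnboundedAt p a b c}.Infinite) :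
    c < a ∧ c < b := by
  obtain ⟨p, hp, hmod, hunb⟩ := hinf.nonempty
  have : Fact p.Prime := ⟨hp⟩
  obtain ⟨ha, ha1, hb, hb1, -, hc1, -, -⟩ := hadm
  have haD : a.den ∣ D := hD ▸ (Nat.dvd_lcm_left _ _).trans (Nat.dvd_lcm_left _ _)
  have hbD : b.den ∣ D := hD ▸ (Nat.dvd_lcm_right _ _).trans (Nat.dvd_lcm_left _ _)
  have hcD : c.den ∣ D := hD ▸ Nat.dvd_lcm_right _ _
  constructor <;> by_contra! h
  · exact not_unboundedAt_of_le hmod ha h hc1.le hb hb1.le haD hbD hcD hunb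
  · exact not_unboundedAt_of_le hmod hb h hc1.le ha ha1.le hbD haD hcD hunb.comm
end

section
/- Let n ≥ 1, let α_1,…,α_n and β_1,…,β_{n−1} be rational numbers none of which is an integer ≤ 0, and let p be a prime such that v_p(α_j−1) ≥ 0 for all j and v_p(β_k−1) ≥ 0 for all k. Then for every m ≥ 0 the m-th coefficient A_m = (∏_{j=1}^n (α_j)_m) / ((∏_{k=1}^{n−1} (β_k)_m) · m!) of the generalized hypergeometric series ₙF_{n−1}(α_1,…,α_n; β_1,…,β_{n−1}; z) satisfies v_p(A_m) = Σ_{j=1}^n c_p(α_j−1, m) − Σ_{k=1}^{n−1} c_p(β_k−1, m). -/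
open scoped BigOperators

/-- The `m`-th coefficient of the generalized hypergeometric series
`ₙF_{n−1}(α_1,…,α_n; β_1,…,β_{n−1}; z)`. -/
noncomputable def genHypCoeff (n : ℕ) (α : Fin n → ℚ) (β : Fin (n - 1) → ℚ)
    (m : ℕ) : ℚ :=
  (∏ j, (ascPochhammer ℚ m).eval (α j)) /
    ((∏ k, (ascPochhammer ℚ m).eval (β k)) * (m.factorial : ℚ))

/-- The number of carries in the base-`p` addition of `x` and `m`, where
`τ` is the family of truncations of `x`: the number of `j ≥ 1` with
`τ_j(x) + (m mod p^j) ≥ p^j`. -/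
noncomputable def carries (p : ℕ) (τ : ℕ → ℤ) (m : ℕ) : ℕ :=
  {j : ℕ | 1 ≤ j ∧ (p : ℤ) ^ j ≤ τ j + ((m % p ^ j : ℕ) : ℤ)}.ncard

/-!
Write `x = α - 1` and `v = v_p`. Since `(α)_m = ∏_{k=1}^m (x + k)` and `m! = ∏_{k=1}^m k`, it
suffices to show `c_p(x, m+1) + v(m+1) = c_p(x, m) + v(x + m + 1)`, then induct on `m`.
For `j ≥ 1` put `P = p^j` and `a = τ_j(x)`. The ultrametric inequality turns `j ≤ v(x + t)` into
`P ∣ a + t`, so both sides count positions `j`. Position `j` contributes a carry exactly when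
`⌊(a + m)/P⌋ - ⌊m/P⌋ = 1`, and `P ∣ k + 1` exactly when `⌊(k + 1)/P⌋ - ⌊k/P⌋ = 1`; so the
identity holds position by position, as a telescoping sum of floors.
-/

section PadicVal

variable {p : ℕ} [Fact p.Prime]

theorem padicNorm_le_zpow_iff {q : ℚ} (hq : q ≠ 0) {j : ℤ} :
    padicNorm p q ≤ (p : ℚ) ^ (-j) ↔ j ≤ padicValRat p q := by
  rw [padicNorm.eq_zpow_of_nonzero hq,
    zpow_le_zpow_iff_right₀ (by exact_mod_cast (Fact.out : p.Prime).one_lt), neg_le_neg_iff]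

theorem padicNorm_add_le_iff {a b ε : ℚ} (ha : padicNorm p a ≤ ε) :
    padicNorm p (a + b) ≤ ε ↔ padicNorm p b ≤ ε := by
  refine ⟨fun h => ?_, fun h => padicNorm.nonarchimedean.trans (max_le ha h)⟩
  calc padicNorm p b = padicNorm p (a + b + -a) := by ring_nf
    _ ≤ max (padicNorm p (a + b)) (padicNorm p (-a)) := padicNorm.nonarchimedean
    _ ≤ ε := max_le h (by rwa [padicNorm.neg])

theorem padicValRat_prod {ι : Type*} (s : Finset ι) {f : ι → ℚ} (hf : ∀ i ∈ s, f i ≠ 0) :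
    padicValRat p (∏ i ∈ s, f i) = ∑ i ∈ s, padicValRat p (f i) := by
  classical
  induction s using Finset.induction_on with
  | empty => simp
  | insert a s ha ih =>
    rw [Finset.prod_insert ha, Finset.sum_insert ha,
      padicValRat.mul (hf a (Finset.mem_insert_self a s))
        (Finset.prod_ne_zero_iff.mpr fun i hi => hf i (Finset.mem_insert_of_mem hi)),
      ih fun i hi => hf i (Finset.mem_insert_of_mem hi)]

end PadicVal

namespace IsTrunc

variable {p : ℕ} [Fact p.Prime] {x : ℚ} {τ : ℕ → ℤ}

theorem padicNorm_sub_le (ht : IsTrunc p x τ) (j : ℕ) :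
    padicNorm p (x - τ j) ≤ (p : ℚ) ^ (-(j : ℤ)) := by
  by_cases h0 : x - τ j = 0
  · rw [h0, padicNorm.zero]
    positivity
  · exact (padicNorm_le_zpow_iff h0).2 ((ht j).2.2.resolve_left (sub_ne_zero.1 h0))

theorem le_padicValRat_add_iff (ht : IsTrunc p x τ) (j : ℕ) {t : ℤ} (hxt : x + t ≠ 0) :
    (j : ℤ) ≤ padicValRat p (x + t) ↔ (p : ℤ) ^ j ∣ τ j + t := by
  have hsplit : x + t = (x - τ j) + ((τ j + t : ℤ) : ℚ) := by push_cast; ring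
  rw [← padicNorm_le_zpow_iff hxt, hsplit, padicNorm_add_le_iff (ht.padicNorm_sub_le j),
    ← Nat.cast_pow, padicNorm.dvd_iff_norm_le]

end IsTrunc

theorem add_div_eq_div_add_ite_le_add_mod {a m P : ℕ} (ha : a < P) :
    (a + m) / P = m / P + if P ≤ a + m % P then 1 else 0 := by
  rw [Nat.add_div (by omega), Nat.div_eq_of_lt ha, Nat.mod_eq_of_lt ha, zero_add]

theorem ite_le_add_mod_succ_add_ite_dvd {a m P : ℕ} (ha : a < P) :
    ((if P ≤ a + (m + 1) % P then 1 else 0) + if P ∣ m + 1 then 1 else 0) =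
      (if P ≤ a + m % P then 1 else 0) + if P ∣ a + m + 1 then 1 else 0 := by
  have hm := add_div_eq_div_add_ite_le_add_mod (m := m) ha
  have hm₁ := add_div_eq_div_add_ite_le_add_mod (m := m + 1) ha
  have hs := Nat.succ_div (a := m) (b := P)
  have hs' := Nat.succ_div (a := a + m) (b := P)
  rw [← add_assoc] at hm₁
  omega

theorem and_iff_and_and_or_iff_or_of_ite_add_ite {P Q R S : Prop}
    [Decidable P] [Decidable Q] [Decidable R] [Decidable S]
    (h : ((if P then 1 else 0) + if Q then 1 else 0 : ℕ) =
      (if R then 1 else 0) + if S then 1 else 0) :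
    ((P ∧ Q) ↔ (R ∧ S)) ∧ ((P ∨ Q) ↔ (R ∨ S)) := by
  split_ifs at h <;> simp_all

theorem Set.ncard_add_ncard_eq_of_inter_union {α : Type*} {A B C D : Set α}
    (hC : C.Finite) (hD : D.Finite) (h : ∀ a, ((a ∈ A ∧ a ∈ B) ↔ (a ∈ C ∧ a ∈ D)) ∧
      ((a ∈ A ∨ a ∈ B) ↔ (a ∈ C ∨ a ∈ D))) :
    A.ncard + B.ncard = C.ncard + D.ncard := by
  have hunion : A ∪ B = C ∪ D := Set.ext fun a => (h a).2
  have hinter : A ∩ B = C ∩ D := Set.ext fun a => (h a).1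
  have hAB : (A ∪ B).Finite := hunion ▸ hC.union hD
  rw [← Set.ncard_union_add_ncard_inter A B (hAB.subset Set.subset_union_left)
      (hAB.subset Set.subset_union_right), ← Set.ncard_union_add_ncard_inter C D hC hD,
    hunion, hinter]

def carrySet (p : ℕ) (τ : ℕ → ℤ) (m : ℕ) : Set ℕ :=
  {j : ℕ | 1 ≤ j ∧ (p : ℤ) ^ j ≤ τ j + ((m % p ^ j : ℕ) : ℤ)}

theorem carries_eq_ncard_carrySet (p : ℕ) (τ : ℕ → ℤ) (m : ℕ) :
    carries p τ m = (carrySet p τ m).ncard := rfl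

namespace IsTrunc

variable {p : ℕ} {x : ℚ} {τ : ℕ → ℤ}

theorem carrySet_zero (ht : IsTrunc p x τ) : carrySet p τ 0 = ∅ :=
  Set.eq_empty_of_forall_notMem fun j hj => by
    have := (ht j).2.1
    simp only [carrySet, Set.mem_ofPred_eq, Nat.zero_mod, Nat.cast_zero, add_zero] at hj
    omega

theorem mem_carrySet_iff (ht : IsTrunc p x τ) (m j : ℕ) :
    j ∈ carrySet p τ m ↔ 1 ≤ j ∧ p ^ j ≤ (τ j).toNat + m % p ^ j := by
  have := (ht j).1
  simp only [carrySet, Set.mem_ofPred_eq, ← Nat.cast_pow]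
  omega

variable [Fact p.Prime]

theorem padicValRat_add_nonneg (ht : IsTrunc p x τ) {t : ℤ} (hxt : x + t ≠ 0) :
    0 ≤ padicValRat p (x + t) := by
  exact_mod_cast (ht.le_padicValRat_add_iff 0 hxt).2 (by simp)

theorem mem_Icc_padicValRat_iff (ht : IsTrunc p x τ) {t : ℤ} (hxt : x + t ≠ 0) (j : ℕ) :
    j ∈ Set.Icc 1 (padicValRat p (x + t)).toNat ↔ 1 ≤ j ∧ (p : ℤ) ^ j ∣ τ j + t := by
  rw [Set.mem_Icc, Int.le_toNat (ht.padicValRat_add_nonneg hxt), ht.le_padicValRat_add_iff j hxt]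

theorem mem_carrySet_succ_iff (ht : IsTrunc p x τ) {m : ℕ} (hxm : x + (m + 1 : ℕ) ≠ 0) (j : ℕ) :
    ((j ∈ carrySet p τ (m + 1) ∧ j ∈ Set.Icc 1 (padicValNat p (m + 1))) ↔
        (j ∈ carrySet p τ m ∧ j ∈ Set.Icc 1 (padicValRat p (x + (m + 1 : ℕ))).toNat)) ∧
      ((j ∈ carrySet p τ (m + 1) ∨ j ∈ Set.Icc 1 (padicValNat p (m + 1))) ↔
        (j ∈ carrySet p τ m ∨ j ∈ Set.Icc 1 (padicValRat p (x + (m + 1 : ℕ))).toNat)) := by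
  have hxm' : x + ((m + 1 : ℕ) : ℤ) ≠ 0 := by exact_mod_cast hxm
  obtain ⟨a, ha⟩ : ∃ a : ℕ, τ j = a := Int.eq_ofNat_of_zero_le (ht j).1
  have haP : a < p ^ j := by have := (ht j).2.1; rw [ha] at this; exact_mod_cast this
  have hD := ht.mem_Icc_padicValRat_iff hxm' j
  rw [ha, ← Nat.cast_pow, ← Nat.cast_add, Int.natCast_dvd_natCast, Int.cast_natCast,
    ← add_assoc] at hD
  rw [ht.mem_carrySet_iff, ht.mem_carrySet_iff, hD, ha,
    Set.mem_Icc, ← padicValNat_dvd_iff_le (Nat.succ_ne_zero m)]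
  simp only [Int.toNat_natCast]
  by_cases hj : 1 ≤ j
  · simp only [hj, true_and]
    exact and_iff_and_and_or_iff_or_of_ite_add_ite (ite_le_add_mod_succ_add_ite_dvd haP)
  · simp [hj]

theorem carrySet_finite (ht : IsTrunc p x τ) (hx : ∀ k : ℕ, x + (k + 1 : ℕ) ≠ 0) (m : ℕ) :
    (carrySet p τ m).Finite := by
  induction m with
  | zero => simp [ht.carrySet_zero]
  | succ m ih =>
    exact (ih.union (Set.finite_Icc _ _)).subset fun j hj =>
      (ht.mem_carrySet_succ_iff (hx m) j).2.1 (Or.inl hj)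

theorem carries_succ_add_padicValNat (ht : IsTrunc p x τ) (hx : ∀ k : ℕ, x + (k + 1 : ℕ) ≠ 0)
    (m : ℕ) : (carries p τ (m + 1) : ℤ) + padicValNat p (m + 1) =
      carries p τ m + padicValRat p (x + (m + 1 : ℕ)) := by
  have hv : 0 ≤ padicValRat p (x + (m + 1 : ℕ)) := by
    have := ht.padicValRat_add_nonneg (t := (m + 1 : ℕ)) (by exact_mod_cast hx m)
    exact_mod_cast this
  have hcard := Set.ncard_add_ncard_eq_of_inter_union (ht.carrySet_finite hx m)
    (Set.finite_Icc _ _) (ht.mem_carrySet_succ_iff (hx m))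
  rw [Set.ncard_Icc_nat, Set.ncard_Icc_nat] at hcard
  rw [carries_eq_ncard_carrySet, carries_eq_ncard_carrySet]
  omega

end IsTrunc

theorem ascPochhammer_eval_ne_zero {y : ℚ} (hy : ∀ k : ℕ, y + k ≠ 0) (m : ℕ) :
    (ascPochhammer ℚ m).eval y ≠ 0 :=
  (ascPochhammer_eval_eq_zero_iff m y).not.2 fun ⟨k, _, hk⟩ => hy k (by rw [hk]; ring)

section Pochhammer

variable {p : ℕ} [Fact p.Prime]

theorem IsTrunc.padicValRat_ascPochhammer_eval {y : ℚ} {τ : ℕ → ℤ} (ht : IsTrunc p (y - 1) τ)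
    (hy : ∀ k : ℕ, y + k ≠ 0) (m : ℕ) :
    padicValRat p ((ascPochhammer ℚ m).eval y) =
      carries p τ m + padicValRat p (m.factorial : ℚ) := by
  have hx : ∀ k : ℕ, y - 1 + (k + 1 : ℕ) ≠ 0 := fun k => by
    convert hy k using 1; push_cast; ring
  induction m with
  | zero => simp [carries_eq_ncard_carrySet, ht.carrySet_zero]
  | succ m ih =>
    have hstep := ht.carries_succ_add_padicValNat hx m
    have hym : y + m = y - 1 + (m + 1 : ℕ) := by push_cast; ring
    rw [ascPochhammer_succ_eval, padicValRat.mul (ascPochhammer_eval_ne_zero hy m) (hy m), ih,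
      Nat.factorial_succ, Nat.cast_mul, padicValRat.mul (by positivity) (by positivity),
      padicValRat.of_nat, padicValRat.of_nat, hym]
    omega

theorem padicValRat_prod_ascPochhammer_eval {ι : Type*} [Fintype ι] {y : ι → ℚ}
    {τ : ι → ℕ → ℤ} (ht : ∀ i, IsTrunc p (y i - 1) (τ i)) (hy : ∀ i, ∀ k : ℕ, y i + k ≠ 0)
    (m : ℕ) : padicValRat p (∏ i, (ascPochhammer ℚ m).eval (y i)) =
      ∑ i, (carries p (τ i) m : ℤ) + Fintype.card ι * padicValRat p (m.factorial : ℚ) := by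
  rw [padicValRat_prod _ fun i _ => ascPochhammer_eval_ne_zero (hy i) m,
    Finset.sum_congr rfl fun i _ => (ht i).padicValRat_ascPochhammer_eval (hy i) m,
    Finset.sum_add_distrib, Finset.sum_const, Finset.card_univ, nsmul_eq_mul]

end Pochhammer

theorem stmt_6_general (n : ℕ) (hn : 1 ≤ n) (α : Fin n → ℚ) (β : Fin (n - 1) → ℚ)
    (hα : ∀ j, ∀ z : ℤ, z ≤ 0 → α j ≠ (z : ℚ))
    (hβ : ∀ k, ∀ z : ℤ, z ≤ 0 → β k ≠ (z : ℚ))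
    (p : ℕ) (hp : p.Prime)
    (τα : Fin n → ℕ → ℤ) (τβ : Fin (n - 1) → ℕ → ℤ)
    (hτα : ∀ j, IsTrunc p (α j - 1) (τα j))
    (hτβ : ∀ k, IsTrunc p (β k - 1) (τβ k)) :
    ∀ m : ℕ, padicValRat p (genHypCoeff n α β m) =
      (∑ j, (carries p (τα j) m : ℤ)) - ∑ k, (carries p (τβ k) m : ℤ) := by
  have : Fact p.Prime := ⟨hp⟩
  intro m
  have hα' : ∀ j, ∀ k : ℕ, α j + k ≠ 0 := fun j k h =>
    hα j (-k) (by omega) (by push_cast; linarith)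
  have hβ' : ∀ j, ∀ k : ℕ, β j + k ≠ 0 := fun j k h =>
    hβ j (-k) (by omega) (by push_cast; linarith)
  have hden : ∏ k, (ascPochhammer ℚ m).eval (β k) ≠ 0 :=
    Finset.prod_ne_zero_iff.2 fun k _ => ascPochhammer_eval_ne_zero (hβ' k) m
  have hfac : (m.factorial : ℚ) ≠ 0 := by positivity
  rw [genHypCoeff, padicValRat.div
      (Finset.prod_ne_zero_iff.2 fun j _ => ascPochhammer_eval_ne_zero (hα' j) m)
      (mul_ne_zero hden hfac), padicValRat.mul hden hfac,
    padicValRat_prod_ascPochhammer_eval hτα hα', padicValRat_prod_ascPochhammer_eval hτβ hβ',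
    Fintype.card_fin, Fintype.card_fin, Nat.cast_sub hn]
  ring

/-- Valuation formula: `v_p(A_m) = Σ_j c_p(α_j−1, m) − Σ_k c_p(β_k−1, m)` for the
coefficients of `ₙF_{n−1}`, when `v_p(α_j−1) ≥ 0` and `v_p(β_k−1) ≥ 0`. -/
theorem stmt_6 (n : ℕ) (hn : 1 ≤ n) (α : Fin n → ℚ) (β : Fin (n - 1) → ℚ)
    (hα : ∀ j, ∀ z : ℤ, z ≤ 0 → α j ≠ (z : ℚ))
    (hβ : ∀ k, ∀ z : ℤ, z ≤ 0 → β k ≠ (z : ℚ))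
    (p : ℕ) (hp : p.Prime)
    (hvα : ∀ j, α j - 1 = 0 ∨ 0 ≤ padicValRat p (α j - 1))
    (hvβ : ∀ k, β k - 1 = 0 ∨ 0 ≤ padicValRat p (β k - 1))
    (τα : Fin n → ℕ → ℤ) (τβ : Fin (n - 1) → ℕ → ℤ)
    (hτα : ∀ j, IsTrunc p (α j - 1) (τα j))
    (hτβ : ∀ k, IsTrunc p (β k - 1) (τβ k)) :
    ∀ m : ℕ, padicValRat p (genHypCoeff n α β m) =
      (∑ j, (carries p (τα j) m : ℤ)) - ∑ k, (carries p (τβ k) m : ℤ) :=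
  stmt_6_general n hn α β hα hβ p hp τα τβ hτα hτβ
end

section
/- Let p be a prime, let x be a p-adic integer, and let n be a natural number such that x ≠ −k for every integer k with 1 ≤ k ≤ n. Then the p-adic valuation of the binomial value binom(x+n, n) = (x+1)(x+2)⋯(x+n)/n! equals the number of integers j ≥ 1 such that τ_j(x) + (n mod p^j) ≥ p^j, i.e. the number of carries occurring in the base-p addition of x and n. -/
/-!
Choose `M` with `n ≤ M` such that `p ^ M` divides none of `x + 1, …, x + n`, and put
`a = τ_M(x)`. Since `x ≡ a` modulo `p ^ M`, the ultrametric inequality gives `‖x + k‖ = ‖a + k‖`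
for `1 ≤ k ≤ n`, so the valuation in question is `v_p (binom(a + n, n))`. By Kummer's theorem this
counts the carries of `a + n` in the positions `j ≤ M`, which are those of `x + n` because
`τ_j(x) = a mod p ^ j`. A carry of `x + n` in a position `j > M` would give `k = p ^ j - τ_j(x)`
with `1 ≤ k ≤ n` and `p ^ j ∣ x + k`, so there is none.
-/

open Finset Filter PadicInt

lemma Nat.cast_choose_add_eq_prod_div_factorial {K : Type*} [Field K] [CharZero K] (a n : ℕ) :
    (((a + n).choose n : ℕ) : K) = (∏ i ∈ range n, ((a : K) + i + 1)) / n.factorial := by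
  rw [eq_div_iff (by exact_mod_cast n.factorial_ne_zero), mul_comm]
  have h : ∏ i ∈ range n, (a + i + 1) = n.factorial * (a + n).choose n := by
    rw [← Nat.ascFactorial_eq_factorial_mul_choose, Nat.ascFactorial_eq_prod_range]
    exact prod_congr rfl fun i _ => by ring
  exact_mod_cast h.symm

lemma Padic.valuation_eq_of_norm_eq {p : ℕ} [Fact p.Prime] {x y : ℚ_[p]} (h : ‖x‖ = ‖y‖) :
    x.valuation = y.valuation := by
  rcases eq_or_ne x 0 with rfl | hx
  · rw [norm_zero, eq_comm, norm_eq_zero] at h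
    rw [h]
  have hy : y ≠ 0 := norm_ne_zero_iff.1 (h ▸ norm_ne_zero_iff.2 hx)
  rw [Padic.norm_eq_zpow_neg_valuation hx, Padic.norm_eq_zpow_neg_valuation hy] at h
  have hp : (1 : ℝ) < p := by exact_mod_cast (Fact.out : p.Prime).one_lt
  exact neg_inj.1 (zpow_right_injective₀ (by positivity) hp.ne' h)

namespace PadicInt

variable {p : ℕ} [Fact p.Prime]

lemma eventually_notMem_span_pow {y : ℤ_[p]} (hy : y ≠ 0) :
    ∀ᶠ M in atTop, y ∉ Ideal.span {(p : ℤ_[p]) ^ M} := by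
  filter_upwards [eventually_gt_atTop y.valuation] with M hM
  rw [mem_span_pow_iff_le_valuation y hy]
  omega

lemma norm_eq_of_sub_mem_span_pow {x y : ℤ_[p]} {M : ℕ}
    (hxy : x - y ∈ Ideal.span {(p : ℤ_[p]) ^ M}) (hx : x ∉ Ideal.span {(p : ℤ_[p]) ^ M}) :
    ‖y‖ = ‖x‖ := by
  rw [← norm_le_pow_iff_mem_span_pow] at hxy hx
  have hlt : ‖y - x‖ < ‖x‖ := by rw [norm_sub_rev]; exact hxy.trans_lt (not_le.1 hx)
  rw [← add_sub_cancel x y, IsUltrametricDist.norm_add_eq_max_of_norm_ne_norm hlt.ne',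
    max_eq_left hlt.le]

lemma appr_eq_appr_mod (x : ℤ_[p]) {j M : ℕ} (h : j ≤ M) : x.appr j = x.appr M % p ^ j := by
  obtain ⟨c, hc⟩ := x.dvd_appr_sub_appr j M h
  have : x.appr M = x.appr j + p ^ j * c := by have := x.appr_mono h; omega
  rw [this, Nat.add_mul_mod_self_left, Nat.mod_eq_of_lt (x.appr_lt j)]

lemma exists_add_mem_span_pow_of_carry (x : ℤ_[p]) {j n : ℕ}
    (h : p ^ j ≤ x.appr j + n % p ^ j) :
    ∃ k, 1 ≤ k ∧ k ≤ n ∧ x + k ∈ Ideal.span {(p : ℤ_[p]) ^ j} := by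
  have hlt := x.appr_lt j
  refine ⟨p ^ j - x.appr j, by omega, by have := Nat.mod_le n (p ^ j); omega, ?_⟩
  have : x + ((p ^ j - x.appr j : ℕ) : ℤ_[p]) = (x - x.appr j) + (p : ℤ_[p]) ^ j := by
    push_cast [Nat.cast_sub hlt.le]; ring
  rw [this]
  exact Ideal.add_mem _ (x.appr_spec j) (Ideal.mem_span_singleton_self _)

lemma valuation_prod_add_div_factorial_eq (x : ℤ_[p]) {a n M : ℕ}
    (hxa : x - a ∈ Ideal.span {(p : ℤ_[p]) ^ M})
    (hM : ∀ k ∈ Icc 1 n, x + k ∉ Ideal.span {(p : ℤ_[p]) ^ M}) :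
    ((∏ i ∈ range n, ((x : ℚ_[p]) + i + 1)) / n.factorial).valuation =
      padicValNat p ((a + n).choose n) := by
  rw [← Padic.valuation_natCast, Nat.cast_choose_add_eq_prod_div_factorial]
  refine Padic.valuation_eq_of_norm_eq ?_
  simp only [norm_div, norm_prod]
  congr 1
  refine prod_congr rfl fun i hi => ?_
  have hsub : x + (i + 1 : ℕ) - (a + (i + 1 : ℕ) : ℤ_[p]) = x - a := by ring
  have := norm_eq_of_sub_mem_span_pow (hsub ▸ hxa) (hM (i + 1) (mem_Icc.2 ⟨Nat.le_add_left 1 i, mem_range.1 hi⟩))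
  simpa [PadicInt.norm_def, add_assoc] using this.symm

lemma setOf_carry_eq_filter (x : ℤ_[p]) {n M : ℕ}
    (hM : ∀ k ∈ Icc 1 n, x + k ∉ Ideal.span {(p : ℤ_[p]) ^ M}) :
    {j : ℕ | 1 ≤ j ∧ p ^ j ≤ x.appr j + n % p ^ j} =
      {j ∈ Ico 1 (M + 1) | p ^ j ≤ n % p ^ j + x.appr M % p ^ j} := by
  ext j
  simp only [Set.mem_ofPred_eq, coe_filter, mem_Ico]
  constructor
  · rintro ⟨hj, hcarry⟩
    have hjM : j ≤ M := by
      by_contra! hMj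
      obtain ⟨k, hk1, hkn, hk⟩ := x.exists_add_mem_span_pow_of_carry hcarry
      refine hM k (mem_Icc.2 ⟨hk1, hkn⟩) (Ideal.span_singleton_le_span_singleton.2 ?_ hk)
      exact pow_dvd_pow _ hMj.le
    rw [← x.appr_eq_appr_mod hjM]
    exact ⟨⟨hj, by omega⟩, by omega⟩
  · rintro ⟨⟨hj, hjM⟩, hcarry⟩
    rw [← x.appr_eq_appr_mod (by omega)] at hcarry
    exact ⟨hj, by omega⟩

end PadicInt

/-- Kummer's theorem for `p`-adic integers: for `x ∈ ℤ_p` and `n ∈ ℕ` with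
`x ≠ -k` for all `1 ≤ k ≤ n`, the `p`-adic valuation of
`binom(x+n, n) = (x+1)(x+2)⋯(x+n)/n!` equals the number of carries in the
base-`p` addition of `x` and `n`, i.e. the number of `j ≥ 1` with
`τ_j(x) + (n mod p^j) ≥ p^j`. -/
theorem stmt_9 (p : ℕ) [Fact p.Prime] (x : ℤ_[p]) (n : ℕ)
    (hx : ∀ k : ℕ, 1 ≤ k → k ≤ n → x ≠ -(k : ℤ_[p])) :
    ((∏ i ∈ Finset.range n, ((x : ℚ_[p]) + (i : ℚ_[p]) + 1)) /
        (n.factorial : ℚ_[p])).valuation =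
      ({j : ℕ | 1 ≤ j ∧ p ^ j ≤ x.appr j + n % p ^ j}.ncard : ℤ) := by
  have hp : p.Prime := Fact.out
  have hxk : ∀ k ∈ Icc 1 n, x + k ≠ 0 := fun k hk h =>
    hx k (mem_Icc.1 hk).1 (mem_Icc.1 hk).2 (eq_neg_of_add_eq_zero_left h)
  obtain ⟨M, hnM, hM⟩ := ((eventually_ge_atTop n).and
    ((eventually_all_finset _).2 fun k hk => eventually_notMem_span_pow (hxk k hk))).exists
  have hlog : Nat.log p (x.appr M + n) < M + 1 := by
    refine Nat.log_lt_of_lt_pow' (by omega) ?_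
    have hn : n < p ^ M := (Nat.lt_pow_self hp.one_lt).trans_le (Nat.pow_le_pow_right hp.pos hnM)
    calc x.appr M + n < 2 * p ^ M := by linarith [x.appr_lt M]
      _ ≤ p ^ (M + 1) := by rw [pow_succ']; exact Nat.mul_le_mul_right _ hp.two_le
  rw [valuation_prod_add_div_factorial_eq x (x.appr_spec M) hM, setOf_carry_eq_filter x hM,
    Set.ncard_coe_finset, padicValNat_choose' hlog]
end

section
/- Let p be a prime, x a p-adic integer, and n a natural number. Then the set {j ≥ 1 : τ_j(x) + (n mod p^j) ≥ p^j} of carry positions in the base-p addition of x and n is infinite if and only if x = −k for some integer k with 1 ≤ k ≤ n. -/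
/-!
For `j > n` we have `n mod p^j = n`, and since `0 ≤ τ_j(x) < p^j`, a carry at position `j`
happens exactly when `p^j - τ_j(x) ∈ [1, n]`, i.e. when `p^j ∣ x + k` for some `1 ≤ k ≤ n`.
So there are infinitely many carries iff one of the finitely many `x + k` is divisible by
infinitely many powers of `p`, i.e. iff `x + k = 0` for some `1 ≤ k ≤ n`.
-/

open Filter

theorem Nat.le_add_iff_exists_dvd_add {a m n : ℕ} (ha : a < m) :
    m ≤ a + n ↔ ∃ k ∈ Finset.Icc 1 n, m ∣ a + k := by
  constructor
  · intro h
    exact ⟨m - a, Finset.mem_Icc.mpr ⟨by omega, by omega⟩, by rw [Nat.add_sub_cancel' ha.le]⟩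
  · rintro ⟨k, hk, hdvd⟩
    have hk := Finset.mem_Icc.mp hk
    have := Nat.le_of_dvd (by omega) hdvd
    omega

namespace PadicInt

variable {p : ℕ} [Fact p.Prime]

theorem pow_dvd_add_natCast_iff (x : ℤ_[p]) (j k : ℕ) :
    (p : ℤ_[p]) ^ j ∣ x + k ↔ p ^ j ∣ x.appr j + k := by
  rw [← Ideal.mem_span_singleton, ← ker_toZModPow, RingHom.mem_ker, map_add, map_natCast,
    ← ZMod.natCast_eq_zero_iff, Nat.cast_add]
  rfl

theorem frequently_pow_dvd_iff_eq_zero (y : ℤ_[p]) :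
    (∃ᶠ j in atTop, (p : ℤ_[p]) ^ j ∣ y) ↔ y = 0 := by
  refine ⟨fun h => ?_, fun h => by simp [h, atTop_neBot]⟩
  refine ext_of_toZModPow.mp fun m => ?_
  obtain ⟨j, hmj, hj⟩ := (frequently_atTop.mp h) m
  rw [map_zero, ← RingHom.mem_ker, ker_toZModPow, Ideal.mem_span_singleton]
  exact (pow_dvd_pow _ hmj).trans hj

theorem pow_le_appr_add_iff_exists_pow_dvd_add (x : ℤ_[p]) (j n : ℕ) :
    p ^ j ≤ x.appr j + n ↔ ∃ k ∈ Finset.Icc 1 n, (p : ℤ_[p]) ^ j ∣ x + k := by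
  simp only [Nat.le_add_iff_exists_dvd_add (x.appr_lt j), pow_dvd_add_natCast_iff]

end PadicInt

/-- For `x ∈ ℤ_p` and `n ∈ ℕ`, the set of carry positions in the base-`p`
addition of `x` and `n` is infinite if and only if `x = -k` for some integer
`1 ≤ k ≤ n`. -/
theorem stmt_10 (p : ℕ) [Fact p.Prime] (x : ℤ_[p]) (n : ℕ) :
    {j : ℕ | 1 ≤ j ∧ p ^ j ≤ x.appr j + n % p ^ j}.Infinite ↔
      ∃ k : ℕ, 1 ≤ k ∧ k ≤ n ∧ x = -(k : ℤ_[p]) := by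
  have hp : 1 < p := (Fact.out : p.Prime).one_lt
  rw [← Nat.frequently_atTop_iff_infinite]
  calc (∃ᶠ j in atTop, 1 ≤ j ∧ p ^ j ≤ x.appr j + n % p ^ j)
      ↔ ∃ᶠ j in atTop, ∃ k ∈ Finset.Icc 1 n, (p : ℤ_[p]) ^ j ∣ x + k := by
        refine frequently_congr ((eventually_gt_atTop n).mono fun j hnj => ?_)
        have hn : n % p ^ j = n := Nat.mod_eq_of_lt (hnj.trans (Nat.lt_pow_self hp))
        rw [hn, PadicInt.pow_le_appr_add_iff_exists_pow_dvd_add]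
        exact and_iff_right (by omega)
    _ ↔ ∃ k ∈ Finset.Icc 1 n, x + k = 0 := by
        simp only [Finset.frequently_exists, PadicInt.frequently_pow_dvd_iff_eq_zero]
    _ ↔ ∃ k : ℕ, 1 ≤ k ∧ k ≤ n ∧ x = -(k : ℤ_[p]) := by
        simp only [Finset.mem_Icc, and_assoc, eq_neg_iff_add_eq_zero]
end

section
/- Let p be a prime and let x be a nonzero rational number with v_p(x) = 0. Then there exist an integer M ≥ 1 and an integer y with 1 ≤ y ≤ p^M − 1 such that x = y/(1 − p^M) if and only if −1 ≤ x < 0. (The left-hand condition expresses that x has a purely periodic p-adic expansion.) -/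
/-!
Write `N = p ^ M`. For `1 ≤ y ≤ N - 1` the quotient `y / (1 - N)` plainly lies in `[-1, 0)`.
Conversely, `v_p(x) = 0` makes the denominator `d` of `x` prime to `p`, so by Euler's theorem
`d ∣ p ^ φ(d) - 1`; with `M = φ(d)` the number `y = -x (N - 1)` is then an integer, and
`-1 ≤ x < 0` puts it in `[1, N - 1]`.
-/

lemma Rat.coprime_den_of_padicValRat_eq_zero {p : ℕ} (hp : p.Prime) {x : ℚ}
    (hv : padicValRat p x = 0) : p.Coprime x.den := by
  have : Fact p.Prime := ⟨hp⟩
  refine (Nat.Prime.coprime_iff_not_dvd hp).2 fun hden => ?_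
  have hnum : ¬ (p : ℤ) ∣ x.num := fun hnum =>
    hp.one_lt.ne' <| Nat.eq_one_of_dvd_one <| x.reduced ▸
      Nat.dvd_gcd (Int.natCast_dvd.mp hnum) hden
  have hval_den : 1 ≤ padicValNat p x.den := one_le_padicValNat_of_dvd x.den_ne_zero hden
  rw [padicValRat_def, padicValInt.eq_zero_of_not_dvd hnum] at hv
  omega

lemma Rat.den_dvd_pow_totient_sub_one {p : ℕ} {x : ℚ} (hp : p.Coprime x.den) :
    (x.den : ℤ) ∣ (p : ℤ) ^ x.den.totient - 1 := by
  exact_mod_cast (Nat.ModEq.pow_totient hp).symm.dvd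

lemma div_one_sub_mem_Ico {K : Type*} [Field K] [LinearOrder K] [IsStrictOrderedRing K]
    {y N : K} (hy₁ : 1 ≤ y) (hy₂ : y ≤ N - 1) :
    y / (1 - N) ∈ Set.Ico (-1) 0 := by
  have hN : 1 - N < 0 := by linarith
  exact ⟨(le_div_iff_of_neg hN).2 (by linarith), div_neg_of_pos_of_neg (by linarith) hN⟩

lemma Rat.exists_eq_div_one_sub_of_den_dvd {x : ℚ} {N : ℤ} (hN : 1 < N)
    (hden : (x.den : ℤ) ∣ N - 1) (hx₁ : -1 ≤ x) (hx₂ : x < 0) :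
    ∃ y : ℤ, 1 ≤ y ∧ y ≤ N - 1 ∧ x = y / (1 - N) := by
  obtain ⟨q, hq⟩ := hden
  have hNq : (N : ℚ) - 1 = x.den * q := by exact_mod_cast hq
  set y := -x.num * q
  have hy : (y : ℚ) = -x * (N - 1) := by
    rw [hNq, ← mul_assoc, neg_mul, Rat.mul_den_eq_num]
    push_cast [y]
    ring
  have hN' : (1 : ℚ) < N := by exact_mod_cast hN
  refine ⟨y, ?_, ?_, ?_⟩
  · exact_mod_cast (show (0 : ℚ) < y by rw [hy]; nlinarith)
  · exact_mod_cast (show (y : ℚ) ≤ N - 1 by rw [hy]; nlinarith)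
  · rw [hy, eq_div_iff (by linarith)]
    ring

theorem stmt_12_general (p : ℕ) (hp : p.Prime) (x : ℚ)
    (hv : padicValRat p x = 0) :
    (∃ M : ℕ, 1 ≤ M ∧ ∃ y : ℤ, 1 ≤ y ∧ y ≤ (p : ℤ) ^ M - 1 ∧
      x = (y : ℚ) / (1 - (p : ℚ) ^ M)) ↔ (-1 ≤ x ∧ x < 0) := by
  constructor
  · rintro ⟨M, -, y, hy₁, hy₂, rfl⟩
    exact div_one_sub_mem_Ico (by exact_mod_cast hy₁) (by exact_mod_cast hy₂)
  · rintro ⟨hx₁, hx₂⟩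
    have hM : 1 ≤ x.den.totient := Nat.totient_pos.2 x.den_pos
    have hN : 1 < (p : ℤ) ^ x.den.totient :=
      one_lt_pow₀ (by exact_mod_cast hp.one_lt) (by omega)
    obtain ⟨y, hy₁, hy₂, hxy⟩ := Rat.exists_eq_div_one_sub_of_den_dvd hN
      (Rat.den_dvd_pow_totient_sub_one (Rat.coprime_den_of_padicValRat_eq_zero hp hv)) hx₁ hx₂
    exact ⟨_, hM, y, hy₁, hy₂, by exact_mod_cast hxy⟩

/-- A nonzero rational `x` with `v_p(x) = 0` has a purely periodic `p`-adic
expansion — i.e. `x = y/(1 − p^M)` for some `M ≥ 1` and integer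
`1 ≤ y ≤ p^M − 1` — if and only if `−1 ≤ x < 0`. -/
theorem stmt_12 (p : ℕ) (hp : p.Prime) (x : ℚ) (hx : x ≠ 0)
    (hv : padicValRat p x = 0) :
    (∃ M : ℕ, 1 ≤ M ∧ ∃ y : ℤ, 1 ≤ y ∧ y ≤ (p : ℤ) ^ M - 1 ∧
      x = (y : ℚ) / (1 - (p : ℚ) ^ M)) ↔ (-1 ≤ x ∧ x < 0) :=
  stmt_12_general p hp x hv
end

section
/- Let p be a prime and let n, d be coprime integers with d ≥ 1, p ∤ n, p ∤ d and −1 ≤ n/d < 0. Then the least integer M ≥ 1 for which there exists an integer y with 1 ≤ y ≤ p^M − 1 and n/d = y/(1 − p^M) is equal to the multiplicative order of p in (ℤ/dℤ)^×. (This M is the minimal period of the purely periodic p-adic expansion of n/d.) -/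
/-!
Clearing denominators, `n/d = y/(1 - p^M)` with `1 ≤ y ≤ p^M - 1` has an integer solution `y`
exactly when `d ∣ p^M - 1`: necessity because `n` and `d` are coprime, sufficiency with
`y = -n (p^M - 1)/d`, whose bounds are those of `-1 ≤ n/d < 0`. So the set of admissible `M` is
`{M ≥ 1 | p^M = 1 in ZMod d}`, whose least element is the order of `p`.
-/

theorem IsOfFinOrder.isLeast_orderOf {G : Type*} [Monoid G] {x : G} (hx : IsOfFinOrder x) :
    IsLeast {M : ℕ | 1 ≤ M ∧ x ^ M = 1} (orderOf x) :=
  ⟨⟨hx.orderOf_pos, pow_orderOf_eq_one x⟩, fun _ ⟨hM, hxM⟩ => orderOf_le_of_pow_eq_one hM hxM⟩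

theorem ZMod.natCast_pow_eq_one_iff_dvd (a d M : ℕ) :
    (a : ZMod d) ^ M = 1 ↔ (d : ℤ) ∣ (a : ℤ) ^ M - 1 := by
  rw [← ZMod.intCast_eq_intCast_iff_dvd_sub 1 ((a : ℤ) ^ M)]
  push_cast
  exact eq_comm

theorem exists_eq_div_one_sub_iff_dvd {n : ℤ} {d : ℕ} {N : ℤ} (hcop : Int.gcd n d = 1)
    (hd : 0 < d) (hn : n < 0) (hnd : -(d : ℤ) ≤ n) (hN : 1 < N) :
    (∃ y : ℤ, 1 ≤ y ∧ y ≤ N - 1 ∧ (n : ℚ) / d = y / (1 - N)) ↔ (d : ℤ) ∣ N - 1 := by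
  have hdQ : (d : ℚ) ≠ 0 := by positivity
  have hNQ : (1 : ℚ) - N ≠ 0 := by
    have : (1 : ℚ) < N := by exact_mod_cast hN
    linarith
  constructor
  · rintro ⟨y, -, -, hy⟩
    rw [div_eq_div_iff hdQ hNQ] at hy
    have hy' : n * (1 - N) = y * d := by exact_mod_cast hy
    have hdvd : (d : ℤ) ∣ (N - 1) * n := ⟨-y, by linarith⟩
    exact Int.dvd_of_dvd_mul_left_of_gcd_one hdvd (by rwa [Int.gcd_comm])
  · rintro ⟨k, hk⟩
    have hk_pos : 0 < k := by nlinarith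
    refine ⟨-n * k, by nlinarith, by nlinarith, ?_⟩
    rw [div_eq_div_iff hdQ hNQ]
    have hkQ : (N : ℚ) - 1 = d * k := by exact_mod_cast hk
    push_cast
    linear_combination -(n : ℚ) * hkQ

theorem stmt_13_general (p : ℕ) (hp : p.Prime) (n : ℤ) (d : ℕ) (hd : 1 ≤ d)
    (hcop : Int.gcd n (d : ℤ) = 1) (hpd : ¬ p ∣ d)
    (hx1 : -1 ≤ (n : ℚ) / (d : ℚ)) (hx2 : (n : ℚ) / (d : ℚ) < 0) :
    IsLeast {M : ℕ | 1 ≤ M ∧ ∃ y : ℤ, 1 ≤ y ∧ y ≤ (p : ℤ) ^ M - 1 ∧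
        (n : ℚ) / (d : ℚ) = (y : ℚ) / (1 - (p : ℚ) ^ M)}
      (orderOf (p : ZMod d)) := by
  have : NeZero d := ⟨by omega⟩
  have hdQ : (0 : ℚ) < d := by exact_mod_cast hd
  have hn : n < 0 := by
    have : (n : ℚ) < 0 := by linarith [(div_lt_iff₀ hdQ).mp hx2]
    exact_mod_cast this
  have hnd : -(d : ℤ) ≤ n := by
    have : -(d : ℚ) ≤ n := by linarith [(le_div_iff₀ hdQ).mp hx1]
    exact_mod_cast this
  have hp_unit : IsUnit (p : ZMod d) := (ZMod.isUnit_prime_iff_not_dvd hp).mpr hpd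
  convert hp_unit.isOfFinOrder.isLeast_orderOf using 1
  refine Set.ext fun M => and_congr_right fun hM => ?_
  rw [ZMod.natCast_pow_eq_one_iff_dvd, ← exists_eq_div_one_sub_iff_dvd hcop hd hn hnd
    (one_lt_pow₀ (by exact_mod_cast hp.one_lt) (by omega))]
  push_cast
  rfl

/-- For coprime integers `n, d` with `d ≥ 1`, `p ∤ n`, `p ∤ d` and
`−1 ≤ n/d < 0`, the minimal period of the purely periodic `p`-adic expansion of
`n/d` — i.e. the least `M ≥ 1` for which `n/d = y/(1 − p^M)` with
`1 ≤ y ≤ p^M − 1` — equals the multiplicative order of `p` in `(ℤ/dℤ)^×`. -/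
theorem stmt_13 (p : ℕ) (hp : p.Prime) (n : ℤ) (d : ℕ) (hd : 1 ≤ d)
    (hcop : Int.gcd n (d : ℤ) = 1) (hpn : ¬ (p : ℤ) ∣ n) (hpd : ¬ p ∣ d)
    (hx1 : -1 ≤ (n : ℚ) / (d : ℚ)) (hx2 : (n : ℚ) / (d : ℚ) < 0) :
    IsLeast {M : ℕ | 1 ≤ M ∧ ∃ y : ℤ, 1 ≤ y ∧ y ≤ (p : ℤ) ^ M - 1 ∧
        (n : ℚ) / (d : ℚ) = (y : ℚ) / (1 - (p : ℚ) ^ M)}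
      (orderOf (p : ZMod d)) :=
  stmt_13_general p hp n d hd hcop hpd hx1 hx2
end

section
/- Let x = n/d be a rational number with n, d coprime integers and 0 < x < 1, and let p be a prime with v_p(x − 1) = 0 (equivalently, p ∤ d and p ∤ (n − d)). Let M be the multiplicative order of p modulo d. Then for each index j with 0 ≤ j < M, the j-th p-adic digit of x − 1, namely (τ_{j+1}(x−1) − τ_j(x−1))/p^j, equals ⌊{−p^{M−1−j}·x}·p⌋, where {·} denotes the fractional part and ⌊·⌋ the floor. -/
open scoped BigOperators

/-!
Since `d ∣ p^M - 1`, we can write `1 - x = L / (p^M - 1)` with an integer `L`, so that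
`x - 1 = L (1 + p^M + p^{2M} + ⋯)` in `ℚ_p`: the first `M` truncations of `x - 1` are those of
`L`, and its `j`-th digit is the `j`-th base-`p` digit of `L`. On the other side,
`-p^{M-1-j} x ≡ z := p^{M-1-j} (1 - x) (mod 1)` and `p^{j+1} z = p^M (1 - x) = L + (1 - x)`; as
`0 ≤ 1 - x < 1`, the first digit of `z` after the point is again the `j`-th digit of `L`.
-/

lemma padicNorm_le_zpow_neg_of_le_padicValRat {p : ℕ} [Fact p.Prime] {i : ℕ} {z : ℚ}
    (h : z = 0 ∨ (i : ℤ) ≤ padicValRat p z) : padicNorm p z ≤ (p : ℚ) ^ (-(i : ℤ)) := by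
  by_cases hz : z = 0
  · simp [hz]
  rw [padicNorm.eq_zpow_of_nonzero hz]
  exact zpow_le_zpow_right₀ (by exact_mod_cast (Fact.out : p.Prime).one_le)
    (neg_le_neg (h.resolve_left hz))

theorem IsTrunc.eq_of_padicNorm_sub_le {p : ℕ} [Fact p.Prime] {y : ℚ} {τ : ℕ → ℤ}
    (hτ : IsTrunc p y τ) {i : ℕ} {t : ℤ} (ht0 : 0 ≤ t) (htp : t < (p : ℤ) ^ i)
    (hyt : padicNorm p (y - t) ≤ (p : ℚ) ^ (-(i : ℤ))) : τ i = t := by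
  obtain ⟨hτ0, hτp, hτy⟩ := hτ i
  have hnorm : padicNorm p ((τ i - t : ℤ) : ℚ) ≤ (p : ℚ) ^ (-(i : ℤ)) := by
    have hsplit : ((τ i - t : ℤ) : ℚ) = (y - t) - (y - τ i) := by push_cast; ring
    rw [hsplit]
    exact padicNorm.sub.trans (max_le hyt
      (padicNorm_le_zpow_neg_of_le_padicValRat (hτy.imp_left sub_eq_zero_of_eq)))
  have hdvd : (p : ℤ) ^ i ∣ τ i - t := by exact_mod_cast padicNorm.dvd_iff_norm_le.mpr hnorm
  have := Int.eq_zero_of_abs_lt_dvd hdvd (by rw [abs_lt]; constructor <;> linarith)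
  linarith

lemma padicNorm_sub_emod_le_of_mul_pow_sub_one_eq {p : ℕ} [Fact p.Prime] {M i : ℕ}
    (hM : 0 < M) (hi : i ≤ M) {y : ℚ} {L : ℤ} (hy : ((p : ℚ) ^ M - 1) * y = -L) :
    padicNorm p (y - (L % (p : ℤ) ^ i : ℤ)) ≤ (p : ℚ) ^ (-(i : ℤ)) := by
  set t := L % (p : ℤ) ^ i
  have hunit : padicNorm p ((p : ℤ) ^ M - 1 : ℤ) = 1 := by
    rw [padicNorm.int_eq_one_iff]
    intro h
    have h1 : (p : ℤ) ∣ 1 := by simpa using dvd_sub (dvd_pow_self (p : ℤ) hM.ne') h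
    exact (Fact.out : p.Prime).one_lt.ne'
      (by exact_mod_cast Int.eq_one_of_dvd_one (by positivity) h1)
  have hdvd : (p : ℤ) ^ i ∣ -(L - t) - t * (p : ℤ) ^ M :=
    dvd_sub (Int.dvd_self_sub_of_emod_eq rfl).neg_right ((pow_dvd_pow _ hi).mul_left t)
  have hmul : (((p : ℤ) ^ M - 1 : ℤ) : ℚ) * (y - t) = ((-(L - t) - t * (p : ℤ) ^ M : ℤ) : ℚ) := by
    push_cast
    linear_combination hy
  rw [← one_mul (padicNorm p _), ← hunit, ← padicNorm.mul, hmul]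
  exact padicNorm.dvd_iff_norm_le.mp (by exact_mod_cast hdvd)

theorem IsTrunc.eq_emod_of_mul_pow_sub_one_eq {p : ℕ} [Fact p.Prime] {y : ℚ} {τ : ℕ → ℤ}
    (hτ : IsTrunc p y τ) {M i : ℕ} (hM : 0 < M) (hi : i ≤ M) {L : ℤ}
    (hy : ((p : ℚ) ^ M - 1) * y = -L) : τ i = L % (p : ℤ) ^ i :=
  have hp : (0 : ℤ) < (p : ℤ) ^ i := by have := (Fact.out : p.Prime).pos; positivity
  hτ.eq_of_padicNorm_sub_le (Int.emod_nonneg _ hp.ne') (Int.emod_lt_of_pos _ hp)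
    (padicNorm_sub_emod_le_of_mul_pow_sub_one_eq hM hi hy)

lemma Int.emod_mul_sub_emod (L : ℤ) {a : ℤ} (ha : 0 ≤ a) (b : ℤ) :
    L % (a * b) - L % a = a * (L / a % b) := by
  rw [Int.emod_def, Int.emod_def L a, Int.emod_def (L / a), Int.ediv_ediv_of_nonneg ha]
  ring

lemma Int.emod_pow_succ_sub_emod_ediv (L : ℤ) {p : ℤ} (hp : 0 < p) (j : ℕ) :
    (L % p ^ (j + 1) - L % p ^ j) / p ^ j = L / p ^ j % p := by
  rw [pow_succ, Int.emod_mul_sub_emod L (by positivity),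
    Int.mul_ediv_cancel_left _ (by positivity)]

lemma Int.floor_intCast_add_div_natCast {y : ℚ} (hy0 : 0 ≤ y) (hy1 : y < 1) (L : ℤ) (m : ℕ) :
    ⌊((L : ℚ) + y) / m⌋ = L / m := by
  rw [Int.floor_div_natCast, Int.floor_intCast_add, Int.floor_eq_zero_iff.mpr ⟨hy0, hy1⟩,
    add_zero]

theorem floor_fract_mul_eq_digit {p : ℕ} (hp : 0 < p) (k : ℕ) {z y : ℚ} {L : ℤ}
    (hy0 : 0 ≤ y) (hy1 : y < 1) (hz : (p : ℚ) ^ (k + 1) * z = L + y) :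
    ⌊Int.fract z * p⌋ = L / (p : ℤ) ^ k % p := by
  have hz₁ : z = (L + y) / ((p ^ (k + 1) : ℕ) : ℚ) := by
    push_cast
    field_simp
    linarith
  have hz₂ : z * p = (L + y) / ((p ^ k : ℕ) : ℚ) := by
    rw [hz₁]
    push_cast
    field_simp
    ring
  rw [Int.fract, sub_mul, ← Int.cast_natCast p, ← Int.cast_mul, Int.floor_sub_intCast,
    Int.cast_natCast, hz₂, hz₁, Int.floor_intCast_add_div_natCast hy0 hy1,
    Int.floor_intCast_add_div_natCast hy0 hy1, Int.emod_def, pow_succ]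
  push_cast
  rw [Int.ediv_ediv_of_nonneg (by positivity)]
  ring

lemma intCast_dvd_pow_orderOf_sub_one (p d : ℕ) :
    (d : ℤ) ∣ (p : ℤ) ^ orderOf (p : ZMod d) - 1 := by
  rw [← ZMod.intCast_zmod_eq_zero_iff_dvd]
  push_cast
  rw [pow_orderOf_eq_one, sub_self]

theorem stmt_14_general (p : ℕ) (hp : p.Prime) (n : ℤ) (d : ℕ)
    (x : ℚ) (hx : x = (n : ℚ) / (d : ℚ))
    (h0 : 0 < x) (h1 : x < 1)
    (M : ℕ) (hM : M = orderOf (p : ZMod d))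
    (τ : ℕ → ℤ) (hτ : IsTrunc p (x - 1) τ) :
    ∀ j : ℕ, j < M →
      (τ (j + 1) - τ j) / (p : ℤ) ^ j =
        ⌊Int.fract (-(p : ℚ) ^ (M - 1 - j) * x) * (p : ℚ)⌋ := by
  intro j hj
  have : Fact p.Prime := ⟨hp⟩
  have hd : (d : ℚ) ≠ 0 := by rintro h; simp [hx, h] at h0
  obtain ⟨q, hq⟩ : (d : ℤ) ∣ (p : ℤ) ^ M - 1 := hM ▸ intCast_dvd_pow_orderOf_sub_one p d
  set L : ℤ := (d - n) * q
  have hL : ((p : ℚ) ^ M - 1) * (1 - x) = L := by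
    have hdq : (p : ℚ) ^ M - 1 = d * q := by exact_mod_cast hq
    rw [hdq, hx]
    push_cast [L]
    field_simp
  have hτL (i : ℕ) (hi : i ≤ M) : τ i = L % (p : ℤ) ^ i :=
    hτ.eq_emod_of_mul_pow_sub_one_eq (by omega) hi (by rw [← hL]; ring)
  rw [hτL _ (by omega), hτL _ hj.le, Int.emod_pow_succ_sub_emod_ediv _ (by exact_mod_cast hp.pos),
    ← Int.fract_add_intCast _ ((p : ℤ) ^ (M - 1 - j))]
  have hpow : (p : ℚ) ^ M = p ^ (j + 1) * p ^ (M - 1 - j) := by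
    rw [← pow_add]
    congr 1
    omega
  refine (floor_fract_mul_eq_digit hp.pos j (y := 1 - x) (by linarith) (by linarith) ?_).symm
  rw [← hL]
  push_cast
  linear_combination (x - 1) * hpow

/-- Digit formula: for `x = n/d ∈ (0,1)` in lowest terms, `p` a prime with
`v_p(x − 1) = 0`, and `M` the multiplicative order of `p` mod `d`, the `j`-th
`p`-adic digit of `x − 1` equals `⌊{−p^{M−1−j}·x}·p⌋` for `0 ≤ j < M`. -/
theorem stmt_14 (p : ℕ) (hp : p.Prime) (n : ℤ) (d : ℕ)
    (hcop : Int.gcd n (d : ℤ) = 1) (x : ℚ) (hx : x = (n : ℚ) / (d : ℚ))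
    (h0 : 0 < x) (h1 : x < 1)
    (hv : padicValRat p (x - 1) = 0)
    (M : ℕ) (hM : M = orderOf (p : ZMod d))
    (τ : ℕ → ℤ) (hτ : IsTrunc p (x - 1) τ) :
    ∀ j : ℕ, j < M →
      (τ (j + 1) - τ j) / (p : ℤ) ^ j =
        ⌊Int.fract (-(p : ℚ) ^ (M - 1 - j) * x) * (p : ℚ)⌋ :=
  stmt_14_general p hp n d x hx h0 h1 M hM τ hτ
end

section
/- Let x and y be rational numbers with 0 < x < y < 1, let D be the least common multiple of the denominators of x and y, and let p > D be a prime. Then for every j ≥ 0, the j-th p-adic digit of x − 1 is different from the j-th p-adic digit of y − 1. -/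
open scoped BigOperators

/-!
For `-1 < z < 0` with `D z ∈ ℤ` and `p ∤ D`, the number `D (τ_j - z)` is a positive integer
divisible by `p^j` and smaller than `D p^j`, so `D (τ_j - z) = c_j p^j` with `0 < c_j < D`.
Comparing `j` and `j + 1` gives `D d_j = p c_{j+1} - c_j` for the `j`-th digit `d_j`, hence
`c_j ≡ -D d_j (mod p)`. If `x - 1` and `y - 1` had the same `j`-th digit, their cofactors `c_j`
would agree modulo `p > D`, hence agree, and then `y - x = τ_j(y - 1) - τ_j(x - 1)` would be an
integer in `(0, 1)`.
-/

theorem Int.pow_dvd_of_le_padicValRat {p : ℕ} [Fact p.Prime] {m : ℤ} {j : ℕ}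
    (h : (j : ℤ) ≤ padicValRat p m) : (p : ℤ) ^ j ∣ m :=
  (padicValInt_dvd_iff j m).2 (Or.inr (by rwa [padicValRat.of_int, Nat.cast_le] at h))

theorem padicValRat.natCast_mul_of_not_dvd {p D : ℕ} [Fact p.Prime] (hpD : ¬ p ∣ D) {q : ℚ}
    (hq : q ≠ 0) : padicValRat p (D * q) = padicValRat p q := by
  have hD : (D : ℚ) ≠ 0 := by
    rintro hD
    exact hpD (by simp [Nat.cast_eq_zero.1 hD])
  rw [padicValRat.mul hD hq, padicValRat.of_nat, padicValNat.eq_zero_of_not_dvd hpD,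
    Nat.cast_zero, zero_add]

theorem Int.mul_ediv_pow_eq_of_mul_eq {p D : ℕ} (hp : p.Prime) (hpD : ¬ p ∣ D) {a b : ℤ}
    {j : ℕ} (h : D * a = p ^ j * b) : D * (a / p ^ j) = b := by
  have hpj : (p : ℤ) ^ j ≠ 0 := pow_ne_zero j (by exact_mod_cast hp.ne_zero)
  have hcop : IsCoprime ((p : ℤ) ^ j) D := by
    simpa using Nat.isCoprime_iff_coprime.2 ((hp.coprime_iff_not_dvd.2 hpD).pow_left j)
  obtain ⟨k, rfl⟩ := hcop.dvd_of_dvd_mul_left ⟨b, h⟩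
  rw [Int.mul_ediv_cancel_left _ hpj]
  exact mul_left_cancel₀ hpj (by linear_combination h)

section Truncation

variable {p D : ℕ} [Fact p.Prime] {z : ℚ} {τ : ℕ → ℤ}

theorem IsTrunc.exists_cofactor (hτ : IsTrunc p z τ) (hpD : ¬ p ∣ D) (hz₀ : -1 < z)
    (hz₁ : z < 0) (hden : z.den ∣ D) (j : ℕ) :
    ∃ c : ℤ, 0 < c ∧ c < D ∧ (c : ℚ) * p ^ j = D * (τ j - z) := by
  obtain ⟨hτ₀, hτp, hval⟩ := hτ j
  have hτ₀' : (0 : ℚ) ≤ τ j := by exact_mod_cast hτ₀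
  have hτp' : (τ j : ℚ) + 1 ≤ (p : ℚ) ^ j := by exact_mod_cast hτp
  have hpos : 0 < (τ j : ℚ) - z := by linarith
  have hval' : (j : ℤ) ≤ padicValRat p (τ j - z) := by
    rw [← padicValRat.neg, neg_sub]
    exact hval.resolve_left (by linarith)
  obtain ⟨k, hk⟩ := hden
  have hm : ((D * τ j - k * z.num : ℤ) : ℚ) = D * (τ j - z) := by
    push_cast [hk, ← z.den_mul_eq_num]
    ring
  obtain ⟨c, hc⟩ : (p : ℤ) ^ j ∣ D * τ j - k * z.num := by
    apply Int.pow_dvd_of_le_padicValRat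
    rwa [hm, padicValRat.natCast_mul_of_not_dvd hpD hpos.ne']
  have hcq : (c : ℚ) * p ^ j = D * (τ j - z) := by
    rw [← hm, hc]
    push_cast
    ring
  have hpj : (0 : ℚ) < (p : ℚ) ^ j := pow_pos (by exact_mod_cast (Fact.out : p.Prime).pos) j
  have hD : (0 : ℚ) < D := by
    rcases Nat.eq_zero_or_pos D with rfl | hD
    · exact absurd (dvd_zero p) hpD
    · exact_mod_cast hD
  refine ⟨c, ?_, ?_, hcq⟩
  · have : (0 : ℚ) < c := pos_of_mul_pos_left (hcq ▸ mul_pos hD hpos) hpj.le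
    exact_mod_cast this
  · have : (c : ℚ) < D := by
      refine lt_of_mul_lt_mul_right ?_ hpj.le
      rw [hcq]
      nlinarith
    exact_mod_cast this

theorem IsTrunc.exists_cofactor_mul_digit (hτ : IsTrunc p z τ) (hpD : ¬ p ∣ D) (hz₀ : -1 < z)
    (hz₁ : z < 0) (hden : z.den ∣ D) (j : ℕ) :
    ∃ c c' : ℤ, 0 < c ∧ c < D ∧ (c : ℚ) * p ^ j = D * (τ j - z) ∧
      D * ((τ (j + 1) - τ j) / (p : ℤ) ^ j) = p * c' - c := by
  obtain ⟨c, hc₀, hcD, hc⟩ := hτ.exists_cofactor hpD hz₀ hz₁ hden j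
  obtain ⟨c', -, -, hc'⟩ := hτ.exists_cofactor hpD hz₀ hz₁ hden (j + 1)
  refine ⟨c, c', hc₀, hcD, hc, Int.mul_ediv_pow_eq_of_mul_eq Fact.out hpD ?_⟩
  have : (D : ℚ) * (τ (j + 1) - τ j) = p ^ j * (p * c' - c) := by
    linear_combination hc - hc'
  exact_mod_cast this

end Truncation

/-- If `0 < x < y < 1`, `D = lcm` of the denominators of `x` and `y`, and `p > D`
is prime, then for every `j ≥ 0` the `j`-th `p`-adic digits of `x − 1` and
`y − 1` are distinct. -/
theorem stmt_15 (x y : ℚ) (h0 : 0 < x) (hxy : x < y) (h1 : y < 1)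
    (D : ℕ) (hD : D = Nat.lcm x.den y.den)
    (p : ℕ) (hp : p.Prime) (hpD : D < p)
    (τx τy : ℕ → ℤ) (hτx : IsTrunc p (x - 1) τx) (hτy : IsTrunc p (y - 1) τy) :
    ∀ j : ℕ,
      (τx (j + 1) - τx j) / (p : ℤ) ^ j ≠ (τy (j + 1) - τy j) / (p : ℤ) ^ j := by
  intro j hdigit
  have : Fact p.Prime := ⟨hp⟩
  have hD₀ : 0 < D := hD ▸ Nat.lcm_pos x.den_pos y.den_pos
  have hpD' : ¬ p ∣ D := fun h => (Nat.le_of_dvd hD₀ h).not_gt hpD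
  have hxden : (x - 1).den ∣ D := by simpa [hD] using Nat.dvd_lcm_left x.den y.den
  have hyden : (y - 1).den ∣ D := by simpa [hD] using Nat.dvd_lcm_right x.den y.den
  obtain ⟨cx, cx', hcx₀, hcxD, hcx, hdx⟩ :=
    hτx.exists_cofactor_mul_digit hpD' (by linarith) (by linarith) hxden j
  obtain ⟨cy, cy', hcy₀, hcyD, hcy, hdy⟩ :=
    hτy.exists_cofactor_mul_digit hpD' (by linarith) (by linarith) hyden j
  have hc : cx = cy := by
    have hsub : cx - cy = p * (cx' - cy') := by linear_combination hdx - hdy - (D : ℤ) * hdigit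
    have hDp : (D : ℤ) < p := by exact_mod_cast hpD
    exact sub_eq_zero.1 (Int.eq_zero_of_abs_lt_dvd ⟨_, hsub⟩ (abs_lt.2 ⟨by omega, by omega⟩))
  have hyx : y - x = ((τy j - τx j : ℤ) : ℚ) := by
    have hDq : (D : ℚ) ≠ 0 := by exact_mod_cast hD₀.ne'
    have hcq : (cx : ℚ) = cy := by exact_mod_cast hc
    push_cast
    exact mul_left_cancel₀ hDq (by linear_combination hcy - hcx + (p : ℚ) ^ j * hcq)
  have hk₀ : (0 : ℚ) < ((τy j - τx j : ℤ) : ℚ) := by rw [← hyx]; linarith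
  have hk₁ : ((τy j - τx j : ℤ) : ℚ) < 1 := by rw [← hyx]; linarith
  have : (0 : ℤ) < τy j - τx j := by exact_mod_cast hk₀
  have : τy j - τx j < 1 := by exact_mod_cast hk₁
  omega
end

section
/- Let p be an odd prime. Then for every m ≥ 0, the m-th coefficient A_m = ((1/2)_m)^2/(m!)^2 of the hypergeometric series ₂F₁(1/2, 1/2; 1; z) satisfies v_p(A_m) = 2·c_p(−1/2, m); in particular v_p(A_m) ≥ 0, so the coefficients of ₂F₁(1/2, 1/2; 1; z) are p-adic integers for every odd prime p. -/
open scoped BigOperators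

/-! Since `(1/2)_m / m! = binom(2m, m) / 4^m`, for odd `p` one has
`v_p(A_m) = 2 v_p(binom(2m, m))`, which by Kummer's theorem is twice the number of carries
in the base-`p` addition `m + m`. The truncations of `-1/2` are `τ_j = (p^j - 1)/2`, and since
`p^j` is odd, `τ_j + r ≥ p^j` holds iff `2r ≥ p^j`: the carries of `-1/2 + m` are exactly those
of `m + m`. -/

theorem ascPochhammer_eval_half {K : Type*} [Field K] [CharZero K] (m : ℕ) :
    (ascPochhammer K m).eval (1 / 2 : K) = ((2 * m).factorial : K) / (4 ^ m * m.factorial) := by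
  induction m with
  | zero => simp
  | succ n ih =>
    rw [ascPochhammer_succ_eval, ih, show 2 * (n + 1) = 2 * n + 1 + 1 by ring,
      Nat.factorial_succ, Nat.factorial_succ, Nat.factorial_succ]
    push_cast
    field_simp
    ring

theorem hypCoeff_half_half_one (m : ℕ) :
    hypCoeff (1 / 2) (1 / 2) 1 m = ((m.centralBinom : ℚ) / 4 ^ m) ^ 2 := by
  rw [hypCoeff, ascPochhammer_eval_half, ascPochhammer_eval_one, Nat.centralBinom_eq_two_mul_choose,
    Nat.cast_choose ℚ (by omega : m ≤ 2 * m), show 2 * m - m = m by omega]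
  field_simp

section OddPrime

variable {p : ℕ} [Fact p.Prime]

theorem padicValRat_two_of_ne_two (hodd : p ≠ 2) : padicValRat p 2 = 0 := by
  rw [show (2 : ℚ) = (2 : ℕ) by norm_num, padicValRat.of_nat, padicValNat_primes hodd,
    Nat.cast_zero]

theorem padicValRat_hypCoeff_half_half_one (hodd : p ≠ 2) (m : ℕ) :
    padicValRat p (hypCoeff (1 / 2) (1 / 2) 1 m) = 2 * (padicValNat p m.centralBinom : ℤ) := by
  have h4 : padicValRat p ((4 : ℚ) ^ m) = 0 := by
    rw [show (4 : ℚ) ^ m = 2 ^ (2 * m) by rw [pow_mul]; norm_num, padicValRat.pow,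
      padicValRat_two_of_ne_two hodd, mul_zero]
  rw [hypCoeff_half_half_one, padicValRat.pow,
    padicValRat.div (by exact_mod_cast m.centralBinom_ne_zero) (by positivity), h4,
    padicValRat.of_nat]
  ring

theorem IsTrunc.two_mul_add_one_eq_pow (hodd : p ≠ 2) {τ : ℕ → ℤ}
    (hτ : IsTrunc p (-(1 / 2) : ℚ) τ) (j : ℕ) : 2 * τ j + 1 = (p : ℤ) ^ j := by
  obtain ⟨hτ0, hτp, hτx | hval⟩ := hτ j
  · have : (-1 : ℤ) = 2 * τ j := by exact_mod_cast (by rw [← hτx]; ring : (-1 : ℚ) = 2 * τ j)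
    omega
  have hdvd : (p : ℤ) ^ j ∣ 2 * τ j + 1 := by
    rw [show (-(1 / 2) : ℚ) - τ j = -(((2 * τ j + 1 : ℤ) : ℚ) / 2) by push_cast; ring,
      padicValRat.neg, padicValRat.div (by exact_mod_cast (by omega : 2 * τ j + 1 ≠ 0)) two_ne_zero,
      padicValRat_two_of_ne_two hodd, sub_zero, padicValRat.of_int] at hval
    exact (padicValInt_dvd_iff j _).2 (Or.inr (by exact_mod_cast hval))
  obtain ⟨c, hc⟩ := hdvd
  have hc1 : c = 1 := by
    have hpj : (0 : ℤ) < (p : ℤ) ^ j := pow_pos (mod_cast (Fact.out : p.Prime).pos) j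
    have : 0 < c := by nlinarith
    have : c < 2 := by nlinarith
    omega
  rw [hc, hc1, mul_one]

theorem padicValNat_centralBinom (m : ℕ) :
    padicValNat p m.centralBinom = {j : ℕ | 1 ≤ j ∧ p ^ j ≤ 2 * (m % p ^ j)}.ncard := by
  rw [Nat.centralBinom_eq_two_mul_choose, two_mul,
    padicValNat_choose' (lt_add_one (Nat.log p (m + m))), ← Set.ncard_coe_finset]
  congr 1
  ext j
  simp only [Finset.coe_filter, Finset.mem_Ico, Set.mem_ofPred_eq]
  constructor
  · rintro ⟨⟨hj, -⟩, hcarry⟩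
    exact ⟨hj, by omega⟩
  · rintro ⟨hj, hcarry⟩
    have hlt : p ^ j < p ^ (Nat.log p (m + m) + 1) :=
      (Nat.lt_pow_succ_log_self (Fact.out : p.Prime).one_lt _).trans_le' (by
        have := Nat.mod_le m (p ^ j); omega)
    exact ⟨⟨hj, (Nat.pow_lt_pow_iff_right (Fact.out : p.Prime).one_lt).1 hlt⟩, by omega⟩

theorem carries_neg_half (hodd : p ≠ 2) {τ : ℕ → ℤ} (hτ : IsTrunc p (-(1 / 2) : ℚ) τ) (m : ℕ) :
    carries p τ m = {j : ℕ | 1 ≤ j ∧ p ^ j ≤ 2 * (m % p ^ j)}.ncard := by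
  unfold carries
  congr 1
  ext j
  refine and_congr_right fun _ => ?_
  have hτj := hτ.two_mul_add_one_eq_pow hodd j
  have hmod := Nat.mod_lt m (pow_pos (Fact.out : p.Prime).pos j)
  zify at hmod ⊢
  generalize ((m : ℤ) % (p : ℤ) ^ j) = r at *
  omega

end OddPrime

/-- For every odd prime `p`, the coefficients
`A_m = ((1/2)_m)^2/(m!)^2` of `₂F₁(1/2, 1/2; 1; z)` satisfy
`v_p(A_m) = 2·c_p(−1/2, m) ≥ 0`; in particular they are `p`-adic integers. -/
theorem stmt_17 (p : ℕ) (hp : p.Prime) (hodd : p ≠ 2)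
    (τ : ℕ → ℤ) (hτ : IsTrunc p (-(1 / 2) : ℚ) τ) :
    ∀ m : ℕ,
      padicValRat p (hypCoeff (1 / 2) (1 / 2) 1 m) = 2 * (carries p τ m : ℤ) ∧
      0 ≤ padicValRat p (hypCoeff (1 / 2) (1 / 2) 1 m) := by
  have := Fact.mk hp
  intro m
  rw [padicValRat_hypCoeff_half_half_one hodd, carries_neg_half hodd hτ,
    padicValNat_centralBinom]
  exact ⟨rfl, by positivity⟩
end

section
/- Let p ≥ 7 be a prime. The coefficients of ₂F₁(1/5, 1/3; 1/2; z) are p-adically unbounded if and only if p ≡ 2, 8 or 14 (mod 15); moreover, if p ≥ 7 and p is not congruent to 2, 8 or 14 modulo 15, then every coefficient A_m of ₂F₁(1/5, 1/3; 1/2; z) satisfies v_p(A_m) ≥ 0. -/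
open scoped BigOperators

/-!
For `p ≥ 7` and `p ^ J > 5m`, Legendre-style counting gives
`v_p(A_m) = ∑_{1 ≤ j ≤ J} (N₅ + N₃ - N₂ - N₁)(p^j)`, where `N_s(q) = #{k < m | q ∣ s k + 1}`
(the factor `m!` is `N₁`). With `q = p^j`, `r = m mod q` and `α_s < q` the root of
`s α + 1 ≡ 0 (mod q)`, one has `N_s(q) = ⌊m / q⌋ + [α_s < r]`. Since `α₁ = q - 1` and
`α₂ = (q - 1)/2`, the level `q` contributes `[α₅ < r] + [α₃ < r] - [α₂ < r]`, which is
nonnegative unless `α₂ < min(α₃, α₅)`, i.e. unless `q ≡ 2, 14 (mod 15)`. Some power of `p` lies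
in these classes iff `p ≡ 2, 8, 14 (mod 15)`, and then a whole residue class of exponents
mod `4` does. Putting the base-`p` digit `(p + 1)/2` at `K` such levels and `0` elsewhere makes
each of them contribute `-1` and every other level `0`, so `v_p(A_m) = -K`.
-/

open Finset

theorem count_dvd_mul_add_one {q s α : ℕ} (hα : α < q) (hsol : q ∣ s * α + 1) (m : ℕ) :
    Nat.count (fun k => q ∣ s * k + 1) m = m / q + if α < m % q then 1 else 0 := by
  have hcop : q.Coprime s := Nat.Coprime.coprime_dvd_left hsol (by simp)
  have hα0 : s * α + 1 ≡ 0 [MOD q] := Nat.modEq_zero_iff_dvd.2 hsol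
  have hiff : (fun k => q ∣ s * k + 1) = (· ≡ α [MOD q]) := by
    ext k
    rw [← Nat.modEq_zero_iff_dvd]
    exact ⟨fun hk => Nat.ModEq.cancel_left_of_coprime hcop ((hk.trans hα0.symm).add_right_cancel' 1),
      fun hk => ((hk.mul_left s).add_right 1).trans hα0⟩
  simp only [hiff, Nat.count_modEq_card m (α.zero_le.trans_lt hα), Nat.mod_eq_of_lt hα]

theorem exists_lt_dvd_mul_add_one {q s : ℕ} (hq : 0 < q) (hs : s.Coprime q) :
    ∃ α < q, q ∣ s * α + 1 := by
  have : NeZero q := ⟨hq.ne'⟩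
  let u := ZMod.unitOfCoprime s hs
  refine ⟨(-((u⁻¹ : (ZMod q)ˣ) : ZMod q)).val, ZMod.val_lt _, ?_⟩
  rw [← ZMod.natCast_eq_zero_iff]
  push_cast
  rw [ZMod.natCast_val, ZMod.cast_id]
  have : (s : ZMod q) = (u : ZMod q) := rfl
  rw [this, mul_neg, Units.mul_inv, neg_add_cancel]

theorem div_le_count_dvd_mul_add_one {q s : ℕ} (hq : 0 < q) (hs : s.Coprime q) (m : ℕ) :
    m / q ≤ Nat.count (fun k => q ∣ s * k + 1) m := by
  obtain ⟨α, hα, hsol⟩ := exists_lt_dvd_mul_add_one hq hs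
  rw [count_dvd_mul_add_one hα hsol]
  exact Nat.le_add_right _ _

theorem count_dvd_mul_add_one_of_mul_mod_lt {q s m : ℕ} (hs : s.Coprime q)
    (hm : s * (m % q) < q) : Nat.count (fun k => q ∣ s * k + 1) m = m / q := by
  obtain ⟨α, hα, hsol⟩ := exists_lt_dvd_mul_add_one (by omega) hs
  have hle : q ≤ s * α + 1 := Nat.le_of_dvd (Nat.succ_pos _) hsol
  have hr : ¬ α < m % q := fun h => by
    rcases Nat.eq_zero_or_pos s with rfl | hs0
    · rw [Nat.coprime_zero_left] at hs
      subst hs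
      rw [Nat.mod_one] at h
      exact Nat.not_lt_zero α h
    · have := Nat.mul_le_mul_left s h
      rw [Nat.mul_succ] at this
      omega
  rw [count_dvd_mul_add_one hα hsol, if_neg hr, add_zero]

theorem coprime_thirty_iff (n : ℕ) : n.Coprime 30 ↔ n % 2 = 1 ∧ n % 3 ≠ 0 ∧ n % 5 ≠ 0 := by
  rw [show (30 : ℕ) = 2 * 3 * 5 by norm_num, Nat.coprime_mul_iff_right, Nat.coprime_mul_iff_right,
    Nat.coprime_comm, Nat.Prime.coprime_iff_not_dvd Nat.prime_two, Nat.coprime_comm,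
    Nat.Prime.coprime_iff_not_dvd Nat.prime_three, Nat.coprime_comm,
    Nat.Prime.coprime_iff_not_dvd Nat.prime_five]
  omega

theorem Nat.Prime.coprime_thirty {p : ℕ} (hp : p.Prime) (hp7 : 7 ≤ p) : p.Coprime 30 := by
  have hmod : ∀ a, 1 < a → a < p → p % a ≠ 0 := fun a ha hap h =>
    (hp.eq_one_or_self_of_dvd a (Nat.dvd_of_mod_eq_zero h)).elim (by omega) (by omega)
  have h2 := hmod 2 (by omega) (by omega)
  exact (coprime_thirty_iff p).2 ⟨by omega, hmod 3 (by omega) (by omega), hmod 5 (by omega) (by omega)⟩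

def levelDefect (q m : ℕ) : ℤ :=
  Nat.count (fun k => q ∣ 5 * k + 1) m + Nat.count (fun k => q ∣ 3 * k + 1) m
    - Nat.count (fun k => q ∣ 2 * k + 1) m - Nat.count (fun k => q ∣ 1 * k + 1) m

section levelDefect

variable {q : ℕ}

theorem levelDefect_eq_zero_of_mul_mod_lt {m : ℕ} (hq : q.Coprime 30) (hm : 5 * (m % q) < q) :
    levelDefect q m = 0 := by
  have hcount : ∀ s, s ∣ 30 → s ≤ 5 → Nat.count (fun k => q ∣ s * k + 1) m = m / q :=
    fun s hs hs5 => count_dvd_mul_add_one_of_mul_mod_lt (hq.coprime_dvd_right hs).symm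
      (lt_of_le_of_lt (Nat.mul_le_mul_right _ hs5) hm)
  simp only [levelDefect, hcount 5 (by norm_num) le_rfl, hcount 3 (by norm_num) (by norm_num),
    hcount 2 (by norm_num) (by norm_num), hcount 1 (by norm_num) (by norm_num)]
  ring

theorem levelDefect_nonneg (hq : q.Coprime 30) (hgood : q % 3 = 1 ∨ q % 5 = 1) (m : ℕ) :
    0 ≤ levelDefect q m := by
  obtain ⟨hodd, -, -⟩ := (coprime_thirty_iff q).1 hq
  have hq0 : 0 < q := by omega
  have hlow : ∀ s, s ∣ 30 → m / q ≤ Nat.count (fun k => q ∣ s * k + 1) m :=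
    fun s hs => div_le_count_dvd_mul_add_one hq0 (hq.coprime_dvd_right hs).symm m
  have c1 := count_dvd_mul_add_one (q := q) (s := 1) (α := q - 1) (by omega) ⟨1, by omega⟩ m
  have c2 := count_dvd_mul_add_one (q := q) (s := 2) (α := (q - 1) / 2) (by omega) ⟨1, by omega⟩ m
  have c3 := hlow 3 (by norm_num)
  have c5 := hlow 5 (by norm_num)
  have hr : m % q < q := Nat.mod_lt m hq0
  unfold levelDefect
  rcases hgood with h3 | h5
  · have c3' := count_dvd_mul_add_one (q := q) (s := 3) (α := (q - 1) / 3) (by omega) ⟨1, by omega⟩ m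
    split_ifs at c1 c2 c3' <;> omega
  · have c5' := count_dvd_mul_add_one (q := q) (s := 5) (α := (q - 1) / 5) (by omega) ⟨1, by omega⟩ m
    split_ifs at c1 c2 c5' <;> omega

theorem levelDefect_eq_neg_one {m : ℕ} (hq : q.Coprime 30) (hbad : q % 15 = 2 ∨ q % 15 = 14)
    (hlow : q < 2 * (m % q)) (hhigh : 5 * (m % q) < 3 * q) : levelDefect q m = -1 := by
  obtain ⟨hodd, -, -⟩ := (coprime_thirty_iff q).1 hq
  have hr : m % q < q := Nat.mod_lt m (by omega)
  have c1 := count_dvd_mul_add_one (q := q) (s := 1) (α := q - 1) (by omega) ⟨1, by omega⟩ m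
  have c2 := count_dvd_mul_add_one (q := q) (s := 2) (α := (q - 1) / 2) (by omega) ⟨1, by omega⟩ m
  have c3 := count_dvd_mul_add_one (q := q) (s := 3) (α := (2 * q - 1) / 3) (by omega) ⟨2, by omega⟩ m
  unfold levelDefect
  rcases hbad with h | h
  · have c5 := count_dvd_mul_add_one (q := q) (s := 5) (α := (3 * q - 1) / 5) (by omega) ⟨3, by omega⟩ m
    split_ifs at c1 c2 c3 c5 <;> omega
  · have c5 := count_dvd_mul_add_one (q := q) (s := 5) (α := (4 * q - 1) / 5) (by omega) ⟨4, by omega⟩ m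
    split_ifs at c1 c2 c3 c5 <;> omega

end levelDefect

theorem factorization_prod_mul_add_one {p s m J : ℕ} (hp : p.Prime) (hJ : s * m < p ^ J) :
    (∏ k ∈ range m, (s * k + 1)).factorization p =
      ∑ i ∈ range J, Nat.count (fun k => p ^ (i + 1) ∣ s * k + 1) m := by
  have hlt : ∀ k ∈ range m, s * k + 1 < p ^ (J + 1) := fun k hk => by
    have := Nat.mul_le_mul_left s (mem_range.1 hk).le
    have := Nat.pow_lt_pow_succ (n := J) hp.one_lt
    omega
  rw [Nat.factorization_prod fun k _ => Nat.succ_ne_zero _, Finset.sum_apply',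
    Finset.sum_congr rfl fun k hk =>
      Nat.factorization_eq_card_pow_dvd_of_lt hp (Nat.succ_pos _) (hlt k hk)]
  simp only [card_filter, Nat.count_eq_card_filter_range]
  rw [Finset.sum_comm, Finset.sum_Ico_eq_sum_range, add_tsub_cancel_right]
  simp only [add_comm 1]

theorem pow_mul_ascPochhammer_eval_one_div (s m : ℕ) (hs : s ≠ 0) :
    (s : ℚ) ^ m * (ascPochhammer ℚ m).eval (1 / (s : ℚ)) = (∏ k ∈ range m, (s * k + 1) : ℕ) := by
  induction m with
  | zero => simp
  | succ m ih =>
    rw [ascPochhammer_succ_eval, prod_range_succ, Nat.cast_mul, ← ih, pow_succ]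
    field_simp
    push_cast
    ring

theorem padicValRat_ascPochhammer_eval_one_div {p s m J : ℕ} (hp : p.Prime) (hps : ¬ p ∣ s)
    (hJ : s * m < p ^ J) :
    padicValRat p ((ascPochhammer ℚ m).eval (1 / (s : ℚ))) =
      ∑ i ∈ range J, (Nat.count (fun k => p ^ (i + 1) ∣ s * k + 1) m : ℤ) := by
  have : Fact p.Prime := ⟨hp⟩
  have hs : s ≠ 0 := by rintro rfl; exact hps (dvd_zero p)
  have hpos : 0 < (ascPochhammer ℚ m).eval (1 / (s : ℚ)) := ascPochhammer_pos _ _ (by positivity)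
  have hval := congrArg (padicValRat p) (pow_mul_ascPochhammer_eval_one_div s m hs)
  rw [padicValRat.mul (by positivity) hpos.ne', padicValRat.pow,
    padicValRat.of_nat, padicValNat.eq_zero_of_not_dvd hps, padicValRat.of_nat,
    ← Nat.factorization_def _ hp, factorization_prod_mul_add_one hp hJ] at hval
  push_cast at hval
  linarith

theorem padicValRat_hypCoeff_s18 {p m J : ℕ} (hp : p.Prime) (hp7 : 7 ≤ p) (hJ : 5 * m < p ^ J) :
    padicValRat p (hypCoeff (1 / 5) (1 / 3) (1 / 2) m) =
      ∑ i ∈ range J, levelDefect (p ^ (i + 1)) m := by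
  have : Fact p.Prime := ⟨hp⟩
  have hval : ∀ s : ℕ, 0 < s → s ≤ 5 → padicValRat p ((ascPochhammer ℚ m).eval (1 / (s : ℚ))) =
      ∑ i ∈ range J, (Nat.count (fun k => p ^ (i + 1) ∣ s * k + 1) m : ℤ) := fun s hs hs5 =>
    padicValRat_ascPochhammer_eval_one_div hp (fun h => by linarith [Nat.le_of_dvd hs h])
      (lt_of_le_of_lt (Nat.mul_le_mul_right m hs5) hJ)
  have hne : ∀ s : ℕ, 0 < s → (ascPochhammer ℚ m).eval (1 / (s : ℚ)) ≠ 0 := fun s hs =>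
    (ascPochhammer_pos _ _ (by positivity)).ne'
  have h5 := hval 5 (by norm_num) le_rfl
  have h3 := hval 3 (by norm_num) (by norm_num)
  have h2 := hval 2 (by norm_num) (by norm_num)
  have h1 := hval 1 (by norm_num) (by norm_num)
  have n5 := hne 5 (by norm_num)
  have n3 := hne 3 (by norm_num)
  have n2 := hne 2 (by norm_num)
  have n1 := hne 1 (by norm_num)
  simp only [Nat.cast_ofNat, Nat.cast_one, div_one, ascPochhammer_eval_one] at h5 h3 h2 h1 n5 n3 n2 n1
  rw [hypCoeff, padicValRat.div (mul_ne_zero n5 n3) (mul_ne_zero n2 n1), padicValRat.mul n5 n3,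
    padicValRat.mul n2 n1, h5, h3, h2, h1]
  simp only [levelDefect, sum_add_distrib, sum_sub_distrib]
  ring

theorem padicValRat_hypCoeff_nonneg_s18 {p : ℕ} (hp : p.Prime) (hp7 : 7 ≤ p)
    (hgood : p % 3 = 1 ∨ p % 5 = 1) (m : ℕ) :
    0 ≤ padicValRat p (hypCoeff (1 / 5) (1 / 3) (1 / 2) m) := by
  rw [padicValRat_hypCoeff_s18 hp hp7 (Nat.lt_pow_self (by omega) : 5 * m < p ^ (5 * m))]
  exact sum_nonneg fun i _ => levelDefect_nonneg ((hp.coprime_thirty hp7).pow_left _)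
    (hgood.imp (fun h => by simp [Nat.pow_mod, h]) (fun h => by simp [Nat.pow_mod, h])) m

theorem sum_digits_lt {p : ℕ} {d : ℕ → ℕ} (hd : ∀ i, d i < p) (j : ℕ) :
    ∑ i ∈ range j, d i * p ^ i < p ^ j := by
  induction j with
  | zero => simp
  | succ j ih =>
    rw [sum_range_succ, pow_succ']
    calc _ < p ^ j + d j * p ^ j := by omega
      _ = (d j + 1) * p ^ j := by ring
      _ ≤ p * p ^ j := Nat.mul_le_mul_right _ (hd j)

theorem sum_digits_mod_pow {p L j : ℕ} {d : ℕ → ℕ} (hd : ∀ i, d i < p) (hj : j ≤ L) :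
    (∑ i ∈ range L, d i * p ^ i) % p ^ j = ∑ i ∈ range j, d i * p ^ i := by
  obtain ⟨c, hc⟩ : p ^ j ∣ ∑ i ∈ Ico j L, d i * p ^ i :=
    dvd_sum fun i hi => Dvd.dvd.mul_left (pow_dvd_pow p (mem_Ico.1 hi).1) _
  rw [← sum_range_add_sum_Ico _ hj, hc, Nat.add_mul_mod_self_left,
    Nat.mod_eq_of_lt (sum_digits_lt hd j)]

section digits

variable {p : ℕ} (hp : p.Prime) (hp17 : 17 ≤ p) {D : Finset ℕ}
  (hD : ∀ i ∈ D, p ^ (i + 1) % 15 = 2 ∨ p ^ (i + 1) % 15 = 14)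
include hp hp17 hD

theorem levelDefect_digitSum {L i : ℕ} (hi : i < L) :
    levelDefect (p ^ (i + 1)) (∑ i ∈ range L, (if i ∈ D then (p + 1) / 2 else 0) * p ^ i) =
      if i ∈ D then -1 else 0 := by
  obtain ⟨hodd, -, -⟩ := (coprime_thirty_iff p).1 (hp.coprime_thirty (by omega))
  have hd : ∀ i, (if i ∈ D then (p + 1) / 2 else 0) < p := fun i => by split_ifs <;> omega
  have hq : (p ^ (i + 1)).Coprime 30 := (hp.coprime_thirty (by omega)).pow_left _
  have hr := sum_digits_mod_pow hd hi
  rw [sum_range_succ, pow_succ'] at hr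
  rw [pow_succ'] at hq ⊢
  have hT := sum_digits_lt hd i
  have hA : 0 < p ^ i := pow_pos hp.pos i
  split_ifs with hiD
  · rw [if_pos hiD] at hr
    have hh : 2 * ((p + 1) / 2) = p + 1 := by omega
    have hhA : 2 * ((p + 1) / 2 * p ^ i) = p * p ^ i + p ^ i := by rw [← mul_assoc, hh]; ring
    have h8 : 8 * p ^ i ≤ (p + 1) / 2 * p ^ i := Nat.mul_le_mul_right _ (by omega)
    apply levelDefect_eq_neg_one hq (pow_succ' p i ▸ hD i hiD) <;> rw [hr] <;> omega
  · rw [if_neg hiD, zero_mul, add_zero] at hr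
    have h5 : 5 * p ^ i ≤ p * p ^ i := Nat.mul_le_mul_right _ (by omega)
    exact levelDefect_eq_zero_of_mul_mod_lt hq (by rw [hr]; omega)

theorem padicValRat_hypCoeff_digitSum {L : ℕ} (hDL : D ⊆ range L) :
    padicValRat p (hypCoeff (1 / 5) (1 / 3) (1 / 2)
      (∑ i ∈ range L, (if i ∈ D then (p + 1) / 2 else 0) * p ^ i)) = -#D := by
  have hd : ∀ i, (if i ∈ D then (p + 1) / 2 else 0) < p := fun i => by split_ifs <;> omega
  have hm := sum_digits_lt hd L
  have h5 : 5 * p ^ L ≤ p * p ^ L := Nat.mul_le_mul_right _ (by omega)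
  have hJ : 5 * (∑ i ∈ range L, (if i ∈ D then (p + 1) / 2 else 0) * p ^ i) < p ^ (L + 1) := by
    rw [pow_succ']; omega
  rw [padicValRat_hypCoeff_s18 hp (by omega) hJ, sum_range_succ,
    levelDefect_eq_zero_of_mul_mod_lt ((hp.coprime_thirty (by omega)).pow_left _)
      (by rwa [Nat.mod_eq_of_lt (hm.trans (Nat.pow_lt_pow_succ hp.one_lt))]),
    sum_congr rfl fun i hi => levelDefect_digitSum hp hp17 hD (mem_range.1 hi),
    sum_ite_mem, inter_eq_right.2 hDL]
  simp

end digits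

theorem exists_pow_mod_fifteen_eq_two_or_fourteen {p : ℕ} (hbad : p % 15 = 2 ∨ p % 15 = 8 ∨ p % 15 = 14) :
    ∃ e ≤ 2, ∀ i, p ^ (4 * i + e + 1) % 15 = 2 ∨ p ^ (4 * i + e + 1) % 15 = 14 := by
  have h4 : p ^ 4 % 15 = 1 := by
    rw [Nat.pow_mod]; rcases hbad with h | h | h <;> rw [h]
  have hper : ∀ i e, p ^ (4 * i + e + 1) % 15 = p ^ (e + 1) % 15 := fun i e => by
    rw [add_assoc, pow_add, pow_mul, Nat.mul_mod, Nat.pow_mod, h4, one_pow, Nat.one_mod, one_mul,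
      Nat.mod_mod]
  rcases hbad with h | h | h
  · exact ⟨0, by norm_num, fun i => by rw [hper i 0, Nat.pow_mod, h]; decide⟩
  · exact ⟨2, le_rfl, fun i => by rw [hper i 2, Nat.pow_mod, h]; decide⟩
  · exact ⟨0, by norm_num, fun i => by rw [hper i 0, Nat.pow_mod, h]; decide⟩

theorem unboundedAt_of_mod_fifteen {p : ℕ} (hp : p.Prime) (hp7 : 7 ≤ p)
    (hbad : p % 15 = 2 ∨ p % 15 = 8 ∨ p % 15 = 14) : UnboundedAt p (1 / 5) (1 / 3) (1 / 2) := by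
  intro N
  obtain ⟨hodd, -, -⟩ := (coprime_thirty_iff p).1 (hp.coprime_thirty hp7)
  obtain ⟨e, he2, he⟩ := exists_pow_mod_fifteen_eq_two_or_fourteen hbad
  set D := (range (N + 1)).image (fun i => 4 * i + e)
  have hDL : D ⊆ range (4 * (N + 1)) := fun j hj => by
    obtain ⟨i, hi, rfl⟩ := mem_image.1 hj
    simp only [mem_range] at hi ⊢
    omega
  have hD : ∀ j ∈ D, p ^ (j + 1) % 15 = 2 ∨ p ^ (j + 1) % 15 = 14 := fun j hj => by
    obtain ⟨i, -, rfl⟩ := mem_image.1 hj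
    exact he i
  refine ⟨∑ i ∈ range (4 * (N + 1)), (if i ∈ D then (p + 1) / 2 else 0) * p ^ i, ?_⟩
  rw [padicValRat_hypCoeff_digitSum hp (by omega) hD hDL,
    card_image_of_injective _ fun a b hab => by omega, card_range]
  push_cast
  omega

/-- For primes `p ≥ 7`, the coefficients of `₂F₁(1/5, 1/3; 1/2; z)` are
`p`-adically unbounded iff `p ≡ 2, 8, 14 (mod 15)`; for all other primes
`p ≥ 7` the coefficients are `p`-integral. -/
theorem stmt_18 (p : ℕ) (hp : p.Prime) (hp7 : 7 ≤ p) :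
    (UnboundedAt p (1 / 5) (1 / 3) (1 / 2) ↔
      (p % 15 = 2 ∨ p % 15 = 8 ∨ p % 15 = 14)) ∧
    (¬ (p % 15 = 2 ∨ p % 15 = 8 ∨ p % 15 = 14) →
      ∀ m : ℕ, 0 ≤ padicValRat p (hypCoeff (1 / 5) (1 / 3) (1 / 2) m)) := by
  obtain ⟨-, h3, h5⟩ := (coprime_thirty_iff p).1 (hp.coprime_thirty hp7)
  have hintegral : ¬ (p % 15 = 2 ∨ p % 15 = 8 ∨ p % 15 = 14) →
      ∀ m, 0 ≤ padicValRat p (hypCoeff (1 / 5) (1 / 3) (1 / 2) m) := fun hgood =>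
    padicValRat_hypCoeff_nonneg_s18 hp hp7 (by omega)
  refine ⟨⟨fun hU => ?_, unboundedAt_of_mod_fifteen hp hp7⟩, hintegral⟩
  by_contra hgood
  obtain ⟨m, hm⟩ := hU 0
  exact (hintegral hgood m).not_gt (by simpa using hm)
end
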